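/- arXiv:2601.05592 — 8 statements merged into one kernel-verified Lean document; each statement's English description precedes it below -/
import Mathlib

section
/- For all integers n > 4, b_{2,2}(n) ≥ b_{2,1}(n), where b_{2,k}(n) is the number of hooks of length k in all 2-regular partitions (partitions into odd parts) of n. -/
open Finset PowerSeries

/-- The list of hook lengths of the Young diagram of a partition whose row
lengths (in nonincreasing order) are given by the list `l`.  The box in row `i`,
column `j` (both 0-indexed) has hook length `(l_i - j) + #{i' > i : j < l_{i'}}`. -/
def hookCount (l : List ℕ) (k : ℕ) : ℕ :=
  ((Finset.range l.length ×ˢ Finset.range (l.getD 0 0)).filter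
    (fun p => p.2 < l.getD p.1 0 ∧
      (l.getD p.1 0 - p.2) +
        ((List.range l.length).filter (fun i' => p.1 < i' ∧ p.2 < l.getD i' 0)).length = k)).card

/-- `b t k n` : the total number of boxes with hook length `k` among the Young
diagrams of all `t`-regular partitions of `n`. -/
def b (t k n : ℕ) : ℕ :=
  ∑ p ∈ Finset.univ.filter (fun p : n.Partition => ∀ i ∈ p.parts, ¬ t ∣ i),
    hookCount ((p.parts.sort (· ≤ ·)).reverse) k

/-!
Sort an odd partition decreasingly. A box of hook length at most 2 lies in one of the last two
columns of its row, and since two distinct parts differ by at least 2, the row of a part `a`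
contributes a hook of length 1 exactly when it is the last row of length `a`, and hooks of
length 2 exactly when it is the last row of length `a ≥ 3` or the second-to-last row of
length `a`. Hence, writing `h k p` for the number of hooks of length `k` of `p` and `r p` for
the number of parts `≥ 3` occurring at least twice, `h 1 p + r p = h 2 p + [p has exactly one 1]`.

It remains to see that for `n ≥ 5` there are at most as many odd partitions of `n` with exactly
one part 1 as with a repeated part `≥ 3`. The partitions of the first kind that are not of the
second are mapped injectively to partitions of the second kind that are not of the first: remove
the part 1 and the largest part `L` and insert two copies of the odd one `u` of `(L ± 1) / 2`,
plus two parts 1 when `2 u = L - 1`.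
-/

theorem List.map_getD_range {α : Type*} (l : List α) (d : α) :
    (List.range l.length).map (fun i => l.getD i d) = l := by
  apply List.ext_getElem (by simp)
  intro i h1 h2
  simp [List.getElem?_eq_getElem h2]

theorem List.length_filter_range_lt {α : Type*} (l : List α) (d : α) (p : α → Prop)
    [DecidablePred p] (i : ℕ) :
    ((List.range l.length).filter (fun i' => i < i' ∧ p (l.getD i' d))).length
      = (l.drop (i + 1)).countP p := by
  induction l generalizing i with
  | nil => simp
  | cons a t ih =>
    rw [List.length_cons, List.range_succ_eq_map, List.filter_cons, List.filter_map]
    cases i with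
    | zero =>
      conv_rhs => rw [List.drop_one, List.tail_cons, ← List.map_getD_range t d, List.countP_map,
        List.countP_eq_length_filter]
      simp [Function.comp_def]
    | succ i => simp [Function.comp_def, ← ih]

theorem List.getD_le_getD_zero {l : List ℕ} (hl : l.Pairwise (· ≥ ·)) (i : ℕ) :
    l.getD i 0 ≤ l.getD 0 0 := by
  rcases l with _ | ⟨a, t⟩
  · simp
  cases i with
  | zero => rfl
  | succ i =>
    simp only [List.getD_cons_succ, List.getD_cons_zero]
    rcases lt_or_ge i t.length with h | h
    · rw [List.getD_eq_getElem _ _ h]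
      exact List.rel_of_pairwise_cons hl (List.getElem_mem h)
    · rw [List.getD_eq_default _ _ h]
      exact Nat.zero_le _

/-- Box `j` of a row of length `a` lying above the rows `t` has arm `a - j - 1` and leg
`#{b ∈ t | j < b}`. -/
def rowHookCount (a : ℕ) (t : List ℕ) (k : ℕ) : ℕ :=
  ((range a).filter (fun j => a - j + t.countP (j < ·) = k)).card

theorem hookCount_eq_sum_rowHookCount {l : List ℕ} (hl : l.Pairwise (· ≥ ·)) (k : ℕ) :
    hookCount l k = ∑ i ∈ range l.length, rowHookCount (l.getD i 0) (l.drop (i + 1)) k := by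
  rw [hookCount, card_filter, sum_product]
  refine sum_congr rfl fun i _ => ?_
  simp only [List.length_filter_range_lt, rowHookCount, ← card_filter]
  congr 1
  ext j
  have := List.getD_le_getD_zero hl i
  simp only [mem_filter, mem_range]
  omega

theorem hookCount_cons {a : ℕ} {t : List ℕ} (h : (a :: t).Pairwise (· ≥ ·)) (k : ℕ) :
    hookCount (a :: t) k = rowHookCount a t k + hookCount t k := by
  rw [hookCount_eq_sum_rowHookCount h, hookCount_eq_sum_rowHookCount h.of_cons, List.length_cons,
    sum_range_succ', add_comm]
  rfl

theorem countP_lt_eq_count_of_odd {a j : ℕ} {t : List ℕ} (ha : ¬ 2 ∣ a)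
    (ht : ∀ x ∈ t, ¬ 2 ∣ x ∧ x ≤ a) (hj : a - 2 ≤ j) (hja : j < a) :
    t.countP (j < ·) = t.count a := by
  rw [List.count_eq_countP]
  refine List.countP_congr fun x hx => ?_
  have := ht x hx
  simp only [decide_eq_true_eq, beq_iff_eq]
  omega

theorem rowHookCount_of_odd {a k : ℕ} {t : List ℕ} (ha : ¬ 2 ∣ a)
    (ht : ∀ x ∈ t, ¬ 2 ∣ x ∧ x ≤ a) (hk : k ≤ 2) :
    rowHookCount a t k = if t.count a < k ∧ k ≤ a + t.count a then 1 else 0 := by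
  have hcell : ∀ j < a, a - j + t.countP (j < ·) = k ↔
      j = a + t.count a - k ∧ t.count a < k ∧ k ≤ a + t.count a := by
    intro j hja
    rcases le_or_gt (a - 2) j with hj | hj
    · rw [countP_lt_eq_count_of_odd ha ht hj hja]
      omega
    · omega
  rw [rowHookCount]
  split_ifs with h
  · rw [card_eq_one]
    refine ⟨a + t.count a - k, ext fun j => ?_⟩
    simp only [mem_filter, mem_range, mem_singleton]
    constructor
    · rintro ⟨hja, hj⟩
      exact ((hcell j hja).1 hj).1
    · rintro rfl
      exact ⟨by omega, (hcell _ (by omega)).2 ⟨rfl, h⟩⟩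
  · rw [card_eq_zero, filter_eq_empty_iff]
    intro j hj hcond
    exact h ((hcell j (mem_range.1 hj)).1 hcond).2

def repeatedLargeParts (m : Multiset ℕ) : Finset ℕ :=
  m.toFinset.filter fun x => 3 ≤ x ∧ 2 ≤ m.count x

theorem card_repeatedLargeParts_cons (a : ℕ) (m : Multiset ℕ) :
    #(repeatedLargeParts (a ::ₘ m)) =
      #(repeatedLargeParts m) + if 3 ≤ a ∧ m.count a = 1 then 1 else 0 := by
  have hcons : repeatedLargeParts (a ::ₘ m) =
      if 3 ≤ a ∧ m.count a = 1 then insert a (repeatedLargeParts m)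
      else repeatedLargeParts m := by
    ext x
    rcases eq_or_ne x a with rfl | hx
    · split_ifs <;> simp only [repeatedLargeParts, mem_insert, mem_filter, Multiset.mem_toFinset,
        Multiset.count_cons_self, ← Multiset.count_pos, true_or, iff_true] <;> omega
    · split_ifs <;> simp [repeatedLargeParts, Multiset.count_cons_of_ne hx, hx]
  split_ifs at hcons ⊢ with h
  · rw [hcons, card_insert_of_notMem (by simp [repeatedLargeParts, h.2])]
  · rw [hcons, add_zero]

theorem hookCount_one_add_card_repeatedLargeParts {l : List ℕ} (hl : l.Pairwise (· ≥ ·))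
    (hodd : ∀ x ∈ l, ¬ 2 ∣ x) :
    hookCount l 1 + #(repeatedLargeParts l) = hookCount l 2 + if l.count 1 = 1 then 1 else 0 := by
  induction l with
  | nil => simp [hookCount, repeatedLargeParts]
  | cons a t ih =>
    have ha := hodd a List.mem_cons_self
    have ht : ∀ x ∈ t, ¬ 2 ∣ x ∧ x ≤ a :=
      fun x hx => ⟨hodd x (List.mem_cons_of_mem a hx), List.rel_of_pairwise_cons hl hx⟩
    have ih := ih hl.of_cons fun x hx => (ht x hx).1
    rw [hookCount_cons hl, hookCount_cons hl, rowHookCount_of_odd ha ht (by norm_num),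
      rowHookCount_of_odd ha ht le_rfl, ← Multiset.cons_coe, card_repeatedLargeParts_cons,
      Multiset.coe_count, List.count_cons]
    rcases eq_or_ne a 1 with rfl | ha1
    · simp only [beq_self_eq_true]
      split_ifs at ih ⊢ <;> omega
    · simp only [beq_iff_eq, ha1, if_false]
      split_ifs at ih ⊢ <;> omega

theorem hookCount_sort_one_add_card_repeatedLargeParts {m : Multiset ℕ}
    (hodd : ∀ x ∈ m, ¬ 2 ∣ x) :
    hookCount (m.sort (· ≤ ·)).reverse 1 + #(repeatedLargeParts m) =
      hookCount (m.sort (· ≤ ·)).reverse 2 + if m.count 1 = 1 then 1 else 0 := by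
  have := hookCount_one_add_card_repeatedLargeParts
    (List.pairwise_reverse.2 (Multiset.pairwise_sort m (· ≤ ·)))
    (fun x hx => hodd x (by rwa [List.mem_reverse, Multiset.mem_sort] at hx))
  rwa [← Multiset.coe_count, Multiset.coe_reverse, Multiset.sort_eq] at this

theorem Multiset.sup_mem_of_ne_zero {α : Type*} [LinearOrder α] [OrderBot α] {m : Multiset α}
    (hm : m ≠ 0) : m.sup ∈ m := by
  induction m using Multiset.induction_on with
  | empty => exact absurd rfl hm
  | cons a s ih =>
    rw [Multiset.sup_cons]
    rcases eq_or_ne s 0 with rfl | hs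
    · simp
    rcases le_total a s.sup with h | h
    · rw [sup_eq_right.2 h]
      exact Multiset.mem_cons_of_mem (ih hs)
    · rw [sup_eq_left.2 h]
      exact Multiset.mem_cons_self a s

-- For odd `L`, the one of `(L - 1) / 2` and `(L + 1) / 2` that is odd.
def oddHalf (L : ℕ) : ℕ := if L % 4 = 1 then (L + 1) / 2 else (L - 1) / 2

theorem oddHalf_spec {L : ℕ} (hL : ¬ 2 ∣ L) (h5 : 5 ≤ L) :
    ¬ 2 ∣ oddHalf L ∧ 3 ≤ oddHalf L ∧ 2 * oddHalf L ≤ L + 1 ∧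
      L + 1 ≤ 2 * oddHalf L + 2 := by
  unfold oddHalf
  split_ifs <;> omega

def mergeOneWithMax (m : Multiset ℕ) : Multiset ℕ :=
  Multiset.replicate 2 (oddHalf m.sup) + Multiset.replicate (m.sup + 1 - 2 * oddHalf m.sup) 1 +
    (m.erase 1).erase m.sup

theorem count_mergeOneWithMax (m : Multiset ℕ) (x : ℕ) :
    (mergeOneWithMax m).count x = (if oddHalf m.sup = x then 2 else 0) +
      (if 1 = x then m.sup + 1 - 2 * oddHalf m.sup else 0) + ((m.erase 1).erase m.sup).count x := by
  simp only [mergeOneWithMax, Multiset.count_add, Multiset.count_replicate]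

theorem two_le_count_oddHalf_mergeOneWithMax (m : Multiset ℕ) :
    2 ≤ (mergeOneWithMax m).count (oddHalf m.sup) := by
  rw [count_mergeOneWithMax, if_pos rfl]
  omega

structure OddSingleOneDistinct (m : Multiset ℕ) : Prop where
  odd : ∀ x ∈ m, ¬ 2 ∣ x
  count_one : m.count 1 = 1
  count_le_one : ∀ a, 3 ≤ a → m.count a ≤ 1
  five_le_sum : 5 ≤ m.sum

namespace OddSingleOneDistinct

variable {m : Multiset ℕ}

theorem five_le_sup (h : OddSingleOneDistinct m) : 5 ≤ m.sup := by
  have hsum := h.five_le_sum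
  by_contra! hL
  have h1 : 1 ∈ m := Multiset.count_pos.1 (by rw [h.count_one]; omega)
  have hthree : m.erase 1 = Multiset.replicate (m.erase 1).card 3 := by
    refine Multiset.eq_replicate.2 ⟨rfl, fun x hx => ?_⟩
    have hx1 : x ≠ 1 := by
      rintro rfl
      rw [← Multiset.count_pos, Multiset.count_erase_self, h.count_one] at hx
      omega
    have := h.odd x (Multiset.mem_of_mem_erase hx)
    have := Multiset.le_sup (Multiset.mem_of_mem_erase hx)
    omega
  have hcard : (m.erase 1).card ≤ 1 := by
    have := h.count_le_one 3 le_rfl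
    rwa [← Multiset.count_erase_of_ne (b := 1) (by norm_num), hthree,
      Multiset.count_replicate_self] at this
  rw [← Multiset.cons_erase h1, Multiset.sum_cons, hthree, Multiset.sum_replicate,
    smul_eq_mul] at hsum
  omega

theorem sup_mem_erase_one (h : OddSingleOneDistinct m) :
    m.sup ∈ m.erase 1 := by
  have h1 : 1 ∈ m := Multiset.count_pos.1 (by rw [h.count_one]; omega)
  have h5 := h.five_le_sup
  rw [Multiset.mem_erase_of_ne (by omega)]
  exact Multiset.sup_mem_of_ne_zero (by rintro rfl; simp at h1)

theorem eq_one_cons_sup_cons (h : OddSingleOneDistinct m) :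
    m = 1 ::ₘ m.sup ::ₘ (m.erase 1).erase m.sup := by
  have h1 : 1 ∈ m := Multiset.count_pos.1 (by rw [h.count_one]; omega)
  rw [Multiset.cons_erase h.sup_mem_erase_one, Multiset.cons_erase h1]

theorem count_one_erase_one_erase_sup (h : OddSingleOneDistinct m) :
    ((m.erase 1).erase m.sup).count 1 = 0 := by
  have h5 := h.five_le_sup
  rw [Multiset.count_erase_of_ne (by omega), Multiset.count_erase_self, h.count_one]

theorem count_erase_one_erase_sup_le_one (h : OddSingleOneDistinct m) {a : ℕ} (ha : 3 ≤ a) :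
    ((m.erase 1).erase m.sup).count a ≤ 1 :=
  (Multiset.count_le_of_le a ((Multiset.erase_le _ _).trans (Multiset.erase_le 1 m))).trans
    (h.count_le_one a ha)

theorem odd_sup (h : OddSingleOneDistinct m) : ¬ 2 ∣ m.sup :=
  h.odd _ (Multiset.mem_of_mem_erase h.sup_mem_erase_one)

theorem oddHalf_sup_spec (h : OddSingleOneDistinct m) :
    ¬ 2 ∣ oddHalf m.sup ∧ 3 ≤ oddHalf m.sup ∧ 2 * oddHalf m.sup ≤ m.sup + 1 ∧
      m.sup + 1 ≤ 2 * oddHalf m.sup + 2 :=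
  oddHalf_spec h.odd_sup h.five_le_sup

theorem sum_mergeOneWithMax (h : OddSingleOneDistinct m) :
    (mergeOneWithMax m).sum = m.sum := by
  have := h.oddHalf_sup_spec
  conv_rhs => rw [h.eq_one_cons_sup_cons]
  simp only [mergeOneWithMax, Multiset.sum_add, Multiset.sum_replicate, Multiset.sum_cons,
    smul_eq_mul]
  omega

theorem odd_of_mem_mergeOneWithMax (h : OddSingleOneDistinct m) :
    ∀ x ∈ mergeOneWithMax m, ¬ 2 ∣ x := by
  have := h.oddHalf_sup_spec
  intro x hx
  simp only [mergeOneWithMax, Multiset.mem_add, Multiset.mem_replicate] at hx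
  rcases hx with (⟨-, rfl⟩ | ⟨-, rfl⟩) | hx
  · exact this.1
  · omega
  · exact h.odd x (Multiset.mem_of_le ((Multiset.erase_le _ _).trans (Multiset.erase_le 1 m)) hx)

theorem count_one_mergeOneWithMax (h : OddSingleOneDistinct m) :
    (mergeOneWithMax m).count 1 = m.sup + 1 - 2 * oddHalf m.sup := by
  have := h.oddHalf_sup_spec
  rw [count_mergeOneWithMax, h.count_one_erase_one_erase_sup, if_neg (by omega), if_pos rfl,
    zero_add, add_zero]

theorem count_one_mergeOneWithMax_ne_one (h : OddSingleOneDistinct m) :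
    (mergeOneWithMax m).count 1 ≠ 1 := by
  have := h.oddHalf_sup_spec
  have := h.odd_sup
  rw [h.count_one_mergeOneWithMax]
  omega

theorem eq_of_mergeOneWithMax_eq {m' : Multiset ℕ} (h : OddSingleOneDistinct m)
    (h' : OddSingleOneDistinct m')
    (heq : mergeOneWithMax m = mergeOneWithMax m') : m = m' := by
  have hspec := h.oddHalf_sup_spec
  have hspec' := h'.oddHalf_sup_spec
  -- `oddHalf m.sup` is the only repeated part `≥ 3`, and the number of 1s then recovers `m.sup`.
  have hu : oddHalf m.sup = oddHalf m'.sup := by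
    by_contra hne
    have := two_le_count_oddHalf_mergeOneWithMax m'
    rw [← heq, count_mergeOneWithMax, if_neg hne, if_neg (by omega)] at this
    have := h.count_erase_one_erase_sup_le_one hspec'.2.1
    omega
  have hsup : m.sup = m'.sup := by
    have := congrArg (Multiset.count 1) heq
    rw [h.count_one_mergeOneWithMax, h'.count_one_mergeOneWithMax, hu] at this
    omega
  have hrest : (m.erase 1).erase m'.sup = (m'.erase 1).erase m'.sup := by
    rw [mergeOneWithMax, mergeOneWithMax, hsup] at heq
    exact add_left_cancel heq
  rw [h.eq_one_cons_sup_cons, h'.eq_one_cons_sup_cons, hsup, hrest]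

theorem repeatedLargeParts_mergeOneWithMax_nonempty (h : OddSingleOneDistinct m) :
    (repeatedLargeParts (mergeOneWithMax m)).Nonempty := by
  have hcount := two_le_count_oddHalf_mergeOneWithMax m
  exact ⟨oddHalf m.sup, mem_filter.2 ⟨Multiset.mem_toFinset.2 (Multiset.count_pos.1 (by omega)),
    h.oddHalf_sup_spec.2.1, hcount⟩⟩

end OddSingleOneDistinct

theorem oddSingleOneDistinct_of_not_nonempty {m : Multiset ℕ} (hodd : ∀ x ∈ m, ¬ 2 ∣ x)
    (hone : m.count 1 = 1) (hrep : ¬ (repeatedLargeParts m).Nonempty) (hsum : 5 ≤ m.sum) :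
    OddSingleOneDistinct m where
  odd := hodd
  count_one := hone
  count_le_one a ha := by
    by_contra! hcount
    exact hrep ⟨a, mem_filter.2
      ⟨Multiset.mem_toFinset.2 (Multiset.count_pos.1 (by omega)), ha, hcount⟩⟩
  five_le_sum := hsum

def mergeOneWithMaxPartition {n : ℕ} (p : n.Partition) : n.Partition :=
  if h : (mergeOneWithMax p.parts).sum = n ∧ ∀ x ∈ mergeOneWithMax p.parts, 0 < x then
    { parts := mergeOneWithMax p.parts, parts_pos := fun hx => h.2 _ hx, parts_sum := h.1 }
  else p

theorem parts_mergeOneWithMaxPartition {n : ℕ} {p : n.Partition}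
    (h : OddSingleOneDistinct p.parts) :
    (mergeOneWithMaxPartition p).parts = mergeOneWithMax p.parts := by
  have hpos : ∀ x ∈ mergeOneWithMax p.parts, 0 < x := fun x hx =>
    Nat.pos_of_ne_zero fun h0 => h.odd_of_mem_mergeOneWithMax x hx (h0 ▸ dvd_zero 2)
  rw [mergeOneWithMaxPartition, dif_pos ⟨h.sum_mergeOneWithMax.trans p.parts_sum, hpos⟩]

theorem card_single_one_le_card_repeated {n : ℕ} (hn : 4 < n) :
    #{p ∈ Nat.Partition.restricted n (¬ 2 ∣ ·) |
        p.parts.count 1 = 1 ∧ ¬ (repeatedLargeParts p.parts).Nonempty} ≤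
      #{p ∈ Nat.Partition.restricted n (¬ 2 ∣ ·) |
        (repeatedLargeParts p.parts).Nonempty ∧ p.parts.count 1 ≠ 1} := by
  have hmerge {p : n.Partition} (hp : p ∈ {p ∈ Nat.Partition.restricted n (¬ 2 ∣ ·) |
      p.parts.count 1 = 1 ∧ ¬ (repeatedLargeParts p.parts).Nonempty}) :
      OddSingleOneDistinct p.parts ∧
        (mergeOneWithMaxPartition p).parts = mergeOneWithMax p.parts := by
    obtain ⟨hodd, hone, hrep⟩ := mem_filter.1 hp
    have h := oddSingleOneDistinct_of_not_nonempty (mem_filter.1 hodd).2 hone hrep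
      (by rw [p.parts_sum]; exact hn)
    exact ⟨h, parts_mergeOneWithMaxPartition h⟩
  refine card_le_card_of_injOn mergeOneWithMaxPartition (fun p hp => ?_)
    (fun p hp q hq hpq => ?_)
  · obtain ⟨h, hparts⟩ := hmerge hp
    simp only [coe_filter, Set.mem_ofPred_eq, hparts]
    exact ⟨mem_filter.2 ⟨mem_univ _, by rw [hparts]; exact h.odd_of_mem_mergeOneWithMax⟩,
      h.repeatedLargeParts_mergeOneWithMax_nonempty,
      h.count_one_mergeOneWithMax_ne_one⟩
  · obtain ⟨h, hparts⟩ := hmerge hp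
    obtain ⟨h', hparts'⟩ := hmerge hq
    apply Nat.Partition.ext
    refine h.eq_of_mergeOneWithMax_eq h' ?_
    rw [← hparts, ← hparts', hpq]

theorem card_filter_count_one_eq_one_le {n : ℕ} (hn : 4 < n) :
    #{p ∈ Nat.Partition.restricted n (¬ 2 ∣ ·) | p.parts.count 1 = 1} ≤
      #{p ∈ Nat.Partition.restricted n (¬ 2 ∣ ·) |
        (repeatedLargeParts p.parts).Nonempty} := by
  have hinj := card_single_one_le_card_repeated hn
  have hsingle := card_filter_add_card_filter_not
    (s := {p ∈ Nat.Partition.restricted n (¬ 2 ∣ ·) | p.parts.count 1 = 1})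
    (fun p => (repeatedLargeParts p.parts).Nonempty)
  have hrepeated := card_filter_add_card_filter_not
    (s := {p ∈ Nat.Partition.restricted n (¬ 2 ∣ ·) | (repeatedLargeParts p.parts).Nonempty})
    (fun p => p.parts.count 1 = 1)
  simp only [filter_filter, ne_eq] at hsingle hrepeated hinj
  rw [filter_congr fun p _ => and_comm] at hsingle
  omega

theorem card_filter_nonempty_le_sum_card {α β : Type*} (s : Finset α) (f : α → Finset β) :
    #{x ∈ s | (f x).Nonempty} ≤ ∑ x ∈ s, #(f x) := by
  rw [card_filter]
  refine sum_le_sum fun x _ => ?_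
  split_ifs with h
  · exact card_pos.2 h
  · exact Nat.zero_le _

theorem stmt2 : ∀ n : ℕ, 4 < n → b 2 1 n ≤ b 2 2 n := by
  intro n hn
  have hsingle := card_filter_count_one_eq_one_le (n := n) hn
  have hrepeated := card_filter_nonempty_le_sum_card (Nat.Partition.restricted n (¬ 2 ∣ ·))
    (fun p => repeatedLargeParts p.parts)
  set S := Nat.Partition.restricted n (¬ 2 ∣ ·)
  have hrows : ∑ p ∈ S, hookCount (p.parts.sort (· ≤ ·)).reverse 1 +
        ∑ p ∈ S, #(repeatedLargeParts p.parts) =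
      ∑ p ∈ S, hookCount (p.parts.sort (· ≤ ·)).reverse 2 +
        #{p ∈ S | p.parts.count 1 = 1} := by
    rw [← sum_add_distrib, card_filter, ← sum_add_distrib]
    exact sum_congr rfl fun p hp =>
      hookCount_sort_one_add_card_repeatedLargeParts (mem_filter.1 hp).2
  change ∑ p ∈ S, _ ≤ ∑ p ∈ S, _
  omega
end

section
/- For all integers n > 4, b_{2,2}(n) − b_{2,1}(n) = (∑_{i=0}^{n−5} d_3(i)) − d_3(n−1), where d_3(m) is the number of partitions of m into distinct parts each of size at least 3 (with d_3(0) = 1). -/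
open Finset PowerSeries

/-- `d3 m` : the number of partitions of `m` into distinct parts, all of size at least `3`.
In particular `d3 0 = 1` (the empty partition). -/
def d3 (m : ℕ) : ℕ :=
  (Finset.univ.filter (fun p : m.Partition => p.parts.Nodup ∧ ∀ i ∈ p.parts, 3 ≤ i)).card

/-!
For a partition into odd parts, read with rows `λ₁ ≥ λ₂ ≥ …`, a box has hook length 1 exactly
when it ends its row and the row below is shorter, so these boxes match the distinct parts. A box
of hook length 2 either ends the second-to-last row of some length `a` (one per part of
multiplicity at least 2), or is the penultimate box of the last row of length `a ≥ 2`: since two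
odd parts never differ by one, the row below is then shorter than `a - 1`. Hence
`b₂,₂(n) - b₂,₁(n)` counts the pairs (partition, part of multiplicity ≥ 2) minus the partitions
containing `1`. Deleting two copies of the part `2t + 1`, resp. one part `1`, and applying Euler's
odd = distinct theorem turns these into `∑ₜ D(n - 2 - 4t)` and `D(n - 1)`, where `D` counts
partitions into distinct parts. Splitting off the parts `1` and `2` gives
`D(m) = d₃(m) + d₃(m-1) + d₃(m-2) + d₃(m-3)`, so the blocks of four in `∑ₜ D(n - 2 - 4t)`
tile `∑_{i ≤ n-2} d₃(i)`.
-/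

def colLen (l : List ℕ) (j : ℕ) : ℕ := l.countP (fun x => j < x)

def hookBoxes (l : List ℕ) (k : ℕ) : Finset (ℕ × ℕ) :=
  (range l.length ×ˢ range (l.getD 0 0)).filter (fun p => p.2 < l.getD p.1 0 ∧
    (l.getD p.1 0 - p.2) +
      ((List.range l.length).filter (fun i' => p.1 < i' ∧ p.2 < l.getD i' 0)).length = k)

theorem hookCount_eq_card_hookBoxes (l : List ℕ) (k : ℕ) : hookCount l k = #(hookBoxes l k) :=
  rfl

theorem colLen_eq_colLen_succ_add_count (l : List ℕ) (j : ℕ) :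
    colLen l j = colLen l (j + 1) + l.count (j + 1) := by
  induction l with
  | nil => rfl
  | cons x t ih =>
    simp only [colLen, List.countP_cons, List.count_cons, beq_iff_eq, decide_eq_true_eq] at ih ⊢
    split_ifs <;> omega

namespace List.SortedGE

variable {l : List ℕ}

theorem lt_getD_iff (hl : l.SortedGE) (i j : ℕ) : j < l.getD i 0 ↔ i < colLen l j := by
  unfold colLen
  rw [List.sortedGE_iff_pairwise] at hl
  induction l generalizing i with
  | nil => simp
  | cons x t ih =>
    obtain ⟨hx, ht⟩ := List.pairwise_cons.1 hl
    by_cases h : j < x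
    · cases i with
      | zero => simp [h]
      | succ i => rw [List.getD_cons_succ, ih ht]; simp [h]
    · have hzero : t.countP (fun y => j < y) = 0 := by
        simpa using fun y hy => (hx y hy).trans (not_lt.1 h)
      cases i with
      | zero => simp [h, hzero]
      | succ i => rw [List.getD_cons_succ, ih ht]; simp [h, hzero]

theorem getD_eq_succ_iff (hl : l.SortedGE) (i j : ℕ) :
    l.getD i 0 = j + 1 ↔ colLen l (j + 1) ≤ i ∧ i < colLen l j := by
  rw [← hl.lt_getD_iff, ← not_lt, ← hl.lt_getD_iff]
  omega

theorem length_filter_range_legs (hl : l.SortedGE) (i j : ℕ) :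
    ((List.range l.length).filter (fun i' => i < i' ∧ j < l.getD i' 0)).length =
      colLen l j - (i + 1) := by
  have hlen : colLen l j ≤ l.length := List.countP_le_length
  change #{i' ∈ Finset.range l.length | i < i' ∧ j < l.getD i' 0} = _
  rw [Nat.sub_add_eq, ← Nat.card_Ioo]
  congr 1
  ext i'
  simp only [Finset.mem_filter, Finset.mem_range, Finset.mem_Ioo, hl.lt_getD_iff]
  omega

theorem mem_hookBoxes_iff (hl : l.SortedGE) (k : ℕ) (p : ℕ × ℕ) :
    p ∈ hookBoxes l k ↔
      p.1 < colLen l p.2 ∧ l.getD p.1 0 - p.2 + (colLen l p.2 - (p.1 + 1)) = k := by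
  have hlen : colLen l p.2 ≤ l.length := List.countP_le_length
  rw [hookBoxes, Finset.mem_filter, Finset.mem_product, Finset.mem_range, Finset.mem_range,
    hl.length_filter_range_legs, hl.lt_getD_iff p.1, hl.lt_getD_iff 0]
  omega

/-- The box ending a row of length `a` with leg `m` lies in the `(m + 1)`-st row of length `a`
counted from the bottom. -/
theorem card_filter_hookBoxes_getD_eq_succ (hl : l.SortedGE) (h0 : 0 ∉ l) (m : ℕ) :
    #{p ∈ hookBoxes l (m + 1) | l.getD p.1 0 = p.2 + 1} = #{a ∈ l.toFinset | m < l.count a} := by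
  have hpos : ∀ a ∈ l, a - 1 + 1 = a := fun a ha =>
    Nat.sub_add_cancel (Nat.one_le_iff_ne_zero.2 fun h => h0 (h ▸ ha))
  refine Finset.card_nbij' (fun p => p.2 + 1) (fun a => (colLen l (a - 1) - 1 - m, a - 1))
    ?_ ?_ ?_ ?_
  · rintro ⟨i, j⟩ hp
    simp only [Finset.coe_filter, Set.mem_ofPred_eq, hl.mem_hookBoxes_iff,
      List.mem_toFinset] at hp ⊢
    have hi := (hl.getD_eq_succ_iff i j).1 hp.2
    have := colLen_eq_colLen_succ_add_count l j
    exact ⟨List.count_pos_iff.1 (by omega), by omega⟩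
  · intro a ha
    simp only [Finset.coe_filter, Set.mem_ofPred_eq, hl.mem_hookBoxes_iff,
      List.mem_toFinset] at ha ⊢
    have := colLen_eq_colLen_succ_add_count l (a - 1)
    rw [hpos a ha.1] at this
    have hi : l.getD (colLen l (a - 1) - 1 - m) 0 = a - 1 + 1 :=
      (hl.getD_eq_succ_iff _ _).2 (by rw [hpos a ha.1]; omega)
    rw [hi]
    omega
  · rintro ⟨i, j⟩ hp
    simp only [Finset.coe_filter, Set.mem_ofPred_eq, hl.mem_hookBoxes_iff] at hp
    simp only [Nat.add_sub_cancel, Prod.mk.injEq, and_true]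
    omega
  · intro a ha
    simp only [Finset.coe_filter, Set.mem_ofPred_eq, List.mem_toFinset] at ha
    exact hpos a ha.1

/-- A box of hook length 2 that does not end its row has arm 1 and leg 0; when no part is followed
by its successor, these are the penultimate boxes of the last row of each length `a ≥ 2`. -/
theorem card_filter_hookBoxes_getD_ne_succ (hl : l.SortedGE) (hgap : ∀ a ∈ l, a + 1 ∉ l) :
    #{p ∈ hookBoxes l 2 | l.getD p.1 0 ≠ p.2 + 1} = #{a ∈ l.toFinset | 2 ≤ a} := by
  refine Finset.card_nbij' (fun p => p.2 + 2) (fun a => (colLen l (a - 2) - 1, a - 2))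
    ?_ ?_ ?_ ?_
  · rintro ⟨i, j⟩ hp
    simp only [Finset.coe_filter, Set.mem_ofPred_eq, hl.mem_hookBoxes_iff,
      List.mem_toFinset] at hp ⊢
    have hj := (hl.lt_getD_iff i j).2 hp.1.1
    have hi : colLen l (j + 2) ≤ i ∧ i < colLen l (j + 1) :=
      (hl.getD_eq_succ_iff i (j + 1)).1 (by omega)
    have hcol : colLen l (j + 1) = colLen l (j + 2) + l.count (j + 2) :=
      colLen_eq_colLen_succ_add_count l (j + 1)
    exact ⟨List.count_pos_iff.1 (by omega), by omega⟩
  · intro a ha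
    simp only [Finset.coe_filter, Set.mem_ofPred_eq, hl.mem_hookBoxes_iff,
      List.mem_toFinset] at ha ⊢
    obtain ⟨b, rfl⟩ := Nat.exists_eq_add_of_le' ha.2
    have hcount : l.count (b + 1) = 0 := List.count_eq_zero.2 fun h => hgap _ h ha.1
    have hb := colLen_eq_colLen_succ_add_count l b
    have hb1 : colLen l (b + 1) = colLen l (b + 2) + l.count (b + 2) :=
      colLen_eq_colLen_succ_add_count l (b + 1)
    have := List.count_pos_iff.2 ha.1
    have hi : l.getD (colLen l b - 1) 0 = b + 2 :=
      (hl.getD_eq_succ_iff _ (b + 1)).2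
        (show colLen l (b + 2) ≤ colLen l b - 1 ∧ colLen l b - 1 < colLen l (b + 1) by omega)
    simp only [Nat.add_sub_cancel, hi]
    omega
  · rintro ⟨i, j⟩ hp
    simp only [Finset.coe_filter, Set.mem_ofPred_eq, hl.mem_hookBoxes_iff] at hp
    have hj := (hl.lt_getD_iff i j).2 hp.1.1
    simp only [Nat.add_sub_cancel, Prod.mk.injEq, and_true]
    omega
  · intro a ha
    simp only [Finset.coe_filter, Set.mem_ofPred_eq] at ha
    exact Nat.sub_add_cancel ha.2

theorem hookCount_one (hl : l.SortedGE) (h0 : 0 ∉ l) : hookCount l 1 = #l.toFinset := by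
  have h := hl.card_filter_hookBoxes_getD_eq_succ h0 0
  rwa [Finset.filter_true_of_mem, Finset.filter_true_of_mem] at h
  · exact fun a ha => List.count_pos_iff.2 (List.mem_toFinset.1 ha)
  · rintro ⟨i, j⟩ hp
    rw [hl.mem_hookBoxes_iff] at hp
    have hj := (hl.lt_getD_iff i j).2 hp.1
    dsimp only at hp ⊢
    omega

theorem hookCount_two (hl : l.SortedGE) (h0 : 0 ∉ l) (hgap : ∀ a ∈ l, a + 1 ∉ l) :
    hookCount l 2 = #{a ∈ l.toFinset | 2 ≤ l.count a} + #{a ∈ l.toFinset | 2 ≤ a} := by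
  rw [hookCount_eq_card_hookBoxes,
    ← Finset.card_filter_add_card_filter_not (fun p => l.getD p.1 0 = p.2 + 1),
    hl.card_filter_hookBoxes_getD_eq_succ h0 1, hl.card_filter_hookBoxes_getD_ne_succ hgap]
  rfl

end List.SortedGE

theorem Multiset.forall_mem_succ_le_iff {s : Multiset ℕ} {c : ℕ} :
    (∀ i ∈ s, c + 1 ≤ i) ↔ c ∉ s ∧ ∀ i ∈ s, c ≤ i :=
  ⟨fun h => ⟨fun hc => Nat.not_succ_le_self c (h c hc), fun i hi => Nat.le_of_succ_le (h i hi)⟩,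
    fun ⟨hc, h⟩ i hi => Nat.lt_of_le_of_ne (h i hi) (by rintro rfl; exact hc hi)⟩

theorem Finset.sum_range_div_add_one_sum_Ico {M : Type*} [AddCommMonoid M] (f : ℕ → M) {b : ℕ}
    (hb : 0 < b) (m : ℕ) :
    ∑ t ∈ range (m / b + 1), ∑ i ∈ Ico (m - b * t + 1 - b) (m - b * t + 1), f i =
      ∑ i ∈ range (m + 1), f i := by
  induction m using Nat.strong_induction_on with
  | _ m ih =>
    rcases lt_or_ge m b with hmb | hmb
    · rw [Nat.div_eq_of_lt hmb, zero_add, sum_range_one, mul_zero, Nat.sub_zero,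
        Nat.sub_eq_zero_of_le hmb, range_eq_Ico]
    · have hshift : ∀ t, m - b * (t + 1) = m - b - b * t := fun t => by
        rw [mul_add_one, add_comm, Nat.sub_sub]
      rw [Nat.div_eq_sub_div hb hmb, sum_range_succ']
      simp only [hshift]
      rw [ih (m - b) (by omega), mul_zero, Nat.sub_zero, Nat.sub_add_comm hmb,
        sum_range_add_sum_Ico _ (by omega)]

namespace Nat.Partition

variable {n : ℕ}

theorem coe_reverse_sort_parts (p : n.Partition) :
    ((p.parts.sort (· ≤ ·)).reverse : Multiset ℕ) = p.parts := by
  rw [Multiset.coe_reverse, Multiset.sort_eq]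

theorem sortedGE_reverse_sort_parts (p : n.Partition) :
    (p.parts.sort (· ≤ ·)).reverse.SortedGE :=
  (Multiset.pairwise_sort _ _).sortedLE.reverse

theorem zero_notMem_reverse_sort_parts (p : n.Partition) :
    0 ∉ (p.parts.sort (· ≤ ·)).reverse := by
  rw [← Multiset.mem_coe, coe_reverse_sort_parts]
  exact fun h => (p.parts_pos h).ne rfl

theorem hookCount_one_eq (p : n.Partition) :
    hookCount (p.parts.sort (· ≤ ·)).reverse 1 = #p.parts.toFinset := by
  rw [(sortedGE_reverse_sort_parts p).hookCount_one (zero_notMem_reverse_sort_parts p),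
    ← List.toFinset_coe, coe_reverse_sort_parts]

theorem hookCount_two_eq (p : n.Partition) (hgap : ∀ a ∈ p.parts, a + 1 ∉ p.parts) :
    hookCount (p.parts.sort (· ≤ ·)).reverse 2 =
      #{a ∈ p.parts.toFinset | 2 ≤ p.parts.count a} + #{a ∈ p.parts.toFinset | 2 ≤ a} := by
  have hcoe := coe_reverse_sort_parts p
  rw [(sortedGE_reverse_sort_parts p).hookCount_two (zero_notMem_reverse_sort_parts p),
    ← List.toFinset_coe, hcoe]
  · simp only [← Multiset.coe_count, hcoe]
  · simpa only [← Multiset.mem_coe, hcoe] using hgap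

theorem card_toFinset_parts (p : n.Partition) :
    #p.parts.toFinset = #{a ∈ p.parts.toFinset | 2 ≤ a} + if 1 ∈ p.parts then 1 else 0 := by
  rw [← Finset.card_filter_add_card_filter_not (fun a => 2 ≤ a)]
  congr 1
  have hone : {a ∈ p.parts.toFinset | ¬ 2 ≤ a} = {a ∈ p.parts.toFinset | a = 1} :=
    Finset.filter_congr fun a ha => by
      have := p.parts_pos (Multiset.mem_toFinset.1 ha)
      omega
  rw [hone, Finset.filter_eq']
  split_ifs <;> simp_all

theorem mul_le_of_le_count (p : n.Partition) {r a : ℕ} (h : r ≤ p.parts.count a) : r * a ≤ n := by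
  obtain ⟨u, hu⟩ := Multiset.le_iff_exists_add.1 (Multiset.le_count_iff_replicate_le.1 h)
  have := congrArg Multiset.sum hu
  rw [Multiset.sum_add, Multiset.sum_replicate, smul_eq_mul, p.parts_sum] at this
  omega

theorem card_eq_card_of_forall_mem_parts {a : ℕ} (ha1 : 1 ≤ a) (ha : a ≤ n)
    {s : Finset n.Partition} {t : Finset (n - a).Partition} (hs : ∀ p ∈ s, a ∈ p.parts)
    (hst : ∀ q, ((partitionWithPartEquiv ha1 ha).symm q).1 ∈ s ↔ q ∈ t) : #s = #t := by
  refine Finset.card_bij' (fun p hp => partitionWithPartEquiv ha1 ha ⟨p, hs p hp⟩)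
    (fun q _ => ((partitionWithPartEquiv ha1 ha).symm q).1) (fun p hp => ?_)
    (fun q hq => (hst q).2 hq) (fun p hp => by simp) (fun q hq => by simp)
  rw [← hst]
  simpa using hp

theorem card_filter_le_count_restricted {P : ℕ → Prop} [DecidablePred P] {a : ℕ} (ha : 0 < a)
    (hPa : P a) (r n : ℕ) (hr : r * a ≤ n) :
    #{p ∈ restricted n P | r ≤ p.parts.count a} = #(restricted (n - r * a) P) := by
  induction r generalizing n with
  | zero => rw [zero_mul, Nat.sub_zero]; simp
  | succ r ih =>
    have han : a ≤ n := le_trans (Nat.le_mul_of_pos_left a r.succ_pos) hr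
    rw [card_eq_card_of_forall_mem_parts ha han
        (t := {q ∈ restricted (n - a) P | r ≤ q.parts.count a}),
      ih (n - a) (by rw [add_one_mul] at hr; omega), Nat.sub_sub, add_one_mul, add_comm a]
    · intro p hp
      exact Multiset.count_pos.1 (by simp only [Finset.mem_filter] at hp; omega)
    · intro q
      simp [restricted, Multiset.count_cons_self, hPa]

theorem filter_forall_not_two_dvd_eq_odds (n : ℕ) :
    Finset.univ.filter (fun p : n.Partition => ∀ i ∈ p.parts, ¬ 2 ∣ i) = odds n := by
  simp [odds, restricted, even_iff_two_dvd]

theorem card_filter_one_mem_odds (hn : 1 ≤ n) :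
    #{p ∈ odds n | 1 ∈ p.parts} = #(odds (n - 1)) := by
  simp only [← Multiset.one_le_count_iff_mem]
  exact card_filter_le_count_restricted one_pos (by decide) 1 n (by omega)

theorem sum_card_filter_two_le_count_odds (hn : 2 ≤ n) :
    ∑ p ∈ odds n, #{a ∈ p.parts.toFinset | 2 ≤ p.parts.count a} =
      ∑ t ∈ range ((n - 2) / 4 + 1), #(odds (n - 2 - 4 * t)) := by
  have hrepeated : ∀ p ∈ odds n, #{a ∈ p.parts.toFinset | 2 ≤ p.parts.count a} =
      #{t ∈ range ((n - 2) / 4 + 1) | 2 ≤ p.parts.count (2 * t + 1)} := by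
    intro p hp
    have hodd : ∀ a ∈ p.parts, a % 2 = 1 := by
      simpa [odds, restricted, Nat.odd_iff] using hp
    refine Finset.card_nbij' (· / 2) (2 * · + 1) ?_ ?_ ?_ ?_
    · intro a ha
      simp only [Finset.coe_filter, Set.mem_ofPred_eq, Multiset.mem_toFinset,
        Finset.mem_range] at ha ⊢
      have := hodd a ha.1
      have := p.mul_le_of_le_count ha.2
      rw [show 2 * (a / 2) + 1 = a by omega]
      exact ⟨by omega, ha.2⟩
    · intro t ht
      simp only [Finset.coe_filter, Set.mem_ofPred_eq, Multiset.mem_toFinset] at ht ⊢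
      exact ⟨Multiset.count_pos.1 (by omega), ht.2⟩
    · intro a ha
      simp only [Finset.coe_filter, Set.mem_ofPred_eq, Multiset.mem_toFinset] at ha
      have := hodd a ha.1
      dsimp only
      omega
    · intro t _
      dsimp only
      omega
  rw [Finset.sum_congr rfl hrepeated]
  simp only [Finset.card_filter]
  rw [Finset.sum_comm]
  refine Finset.sum_congr rfl fun t ht => ?_
  rw [Finset.mem_range] at ht
  rw [← Finset.card_filter, odds,
    card_filter_le_count_restricted (by omega) (by simp) 2 n (by omega),
    show n - 2 * (2 * t + 1) = n - 2 - 4 * t by omega, odds]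

def distinctsGE (n c : ℕ) : Finset n.Partition := {p ∈ distincts n | ∀ i ∈ p.parts, c ≤ i}

theorem d3_eq_card_distinctsGE (n : ℕ) : d3 n = #(distinctsGE n 3) := by
  rw [d3, distinctsGE, distincts, Finset.filter_filter]

theorem distinctsGE_one (n : ℕ) : distinctsGE n 1 = distincts n :=
  Finset.filter_true_of_mem fun p _ _ hi => p.parts_pos hi

theorem card_distinctsGE {c : ℕ} (n : ℕ) (hc : 1 ≤ c) :
    #(distinctsGE n c) = #(distinctsGE n (c + 1)) +
      if c ≤ n then #(distinctsGE (n - c) (c + 1)) else 0 := by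
  rw [← Finset.card_filter_add_card_filter_not (fun p => c ∈ p.parts), add_comm]
  congr 1
  · congr 1
    ext p
    simp only [distinctsGE, distincts, Finset.mem_filter, Finset.mem_univ, true_and,
      Multiset.forall_mem_succ_le_iff]
    tauto
  · split_ifs with hcn
    · refine card_eq_card_of_forall_mem_parts hc hcn (fun p hp => (Finset.mem_filter.1 hp).2)
        fun q => ?_
      simp only [distinctsGE, distincts, Finset.mem_filter, Finset.mem_univ, true_and,
        partitionWithPartEquiv_symm_apply_parts, Multiset.nodup_cons, Multiset.mem_cons,
        forall_eq_or_imp, le_refl, true_or, and_true, Multiset.forall_mem_succ_le_iff]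
      tauto
    · exact Finset.card_eq_zero.2 (Finset.filter_false_of_mem fun p _ h =>
        hcn (le_of_mem_parts h))

theorem card_distincts_eq_sum_d3 (n : ℕ) :
    #(distincts n) = ∑ i ∈ Ico (n + 1 - 4) (n + 1), d3 i := by
  rw [← distinctsGE_one, card_distinctsGE n le_rfl, card_distinctsGE n (by norm_num),
    card_distinctsGE (n - 1) (by norm_num)]
  simp only [Nat.reduceAdd, ← d3_eq_card_distinctsGE]
  rcases n with _ | _ | _ | n
  · simp
  · simp [Finset.sum_range_succ, add_comm]
  · simp [Finset.sum_range_succ, add_comm, add_left_comm, add_assoc]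
  · rw [show n + 3 + 1 - 4 = n by omega, Finset.sum_Ico_eq_sum_range,
      show n + 3 + 1 - n = 4 by omega]
    simp [Finset.sum_range_succ, add_comm, add_left_comm, add_assoc]

end Nat.Partition

open Nat.Partition

theorem b_two_one (n : ℕ) (hn : 1 ≤ n) :
    b 2 1 n = ∑ p ∈ odds n, #{a ∈ p.parts.toFinset | 2 ≤ a} + #(distincts (n - 1)) := by
  rw [b, filter_forall_not_two_dvd_eq_odds, ← card_odds_eq_card_distincts,
    ← card_filter_one_mem_odds hn, Finset.card_filter, ← Finset.sum_add_distrib]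
  exact Finset.sum_congr rfl fun p _ => by rw [hookCount_one_eq, card_toFinset_parts]

theorem b_two_two (n : ℕ) (hn : 2 ≤ n) :
    b 2 2 n = ∑ i ∈ range (n - 1), d3 i + ∑ p ∈ odds n, #{a ∈ p.parts.toFinset | 2 ≤ a} := by
  have hgap : ∀ p ∈ odds n, ∀ a ∈ p.parts, a + 1 ∉ p.parts := by
    intro p hp a ha ha1
    simp only [odds, restricted, Finset.mem_filter] at hp
    exact hp.2 (a + 1) ha1 ((Nat.not_even_iff_odd.1 (hp.2 a ha)).add_one)
  rw [b, filter_forall_not_two_dvd_eq_odds,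
    Finset.sum_congr rfl fun p hp => hookCount_two_eq p (hgap p hp), Finset.sum_add_distrib,
    sum_card_filter_two_le_count_odds hn]
  congr 1
  rw [show n - 1 = n - 2 + 1 by omega, ← Finset.sum_range_div_add_one_sum_Ico d3 four_pos]
  refine Finset.sum_congr rfl fun t _ => ?_
  rw [card_odds_eq_card_distincts, card_distincts_eq_sum_d3]

theorem stmt4 : ∀ n : ℕ, 4 < n →
    (b 2 2 n : ℤ) - (b 2 1 n : ℤ) =
      (∑ i ∈ Finset.range (n - 4), (d3 i : ℤ)) - (d3 (n - 1) : ℤ) := by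
  intro n hn
  have hsplit : ∑ i ∈ range (n - 1), d3 i =
      ∑ i ∈ range (n - 4), d3 i + ∑ i ∈ Ico (n - 4) (n - 1), d3 i :=
    (Finset.sum_range_add_sum_Ico _ (by omega)).symm
  have hlast : #(distincts (n - 1)) = ∑ i ∈ Ico (n - 4) (n - 1), d3 i + d3 (n - 1) := by
    rw [card_distincts_eq_sum_d3, show n - 1 + 1 - 4 = n - 4 by omega,
      Finset.sum_Ico_succ_top (by omega)]
  rw [b_two_two n (by omega), b_two_one n (by omega), hsplit, hlast]
  push_cast
  ring
end

section
/- The generating function identity B_{2,1}(q) = (1/(q;q²)_∞) · ( q/(1−q) − q²/(1−q²) ) holds as an identity of formal power series, where B_{2,1}(q) = ∑_{n≥0} b_{2,1}(n) qⁿ. -/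
open Finset PowerSeries

/-!
A box of a Young diagram has hook length 1 exactly when it ends a row that is strictly longer
than the next one, so a partition has as many such boxes as it has distinct parts. Summing over
the partitions of `n` into odd parts and deleting one copy of a part `k` gives
`b_{2,1}(n) = ∑_{k odd} p_odd(n - k)`, the coefficient of `qⁿ` in `(q;q²)_∞⁻¹ · ∑_{k odd} qᵏ`;
and `∑_{k odd} qᵏ = q/(1-q) - q²/(1-q²)`. Only the factors `1 - q^(2m+1)` with `2m + 1 ≤ n`
affect the coefficient of `qⁿ`, which is why a finite product suffices.
-/

theorem List.SortedGE.antitone_getD {l : List ℕ} (hl : l.SortedGE) : Antitone (l.getD · 0) := by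
  intro i j hij
  by_cases hj : j < l.length
  · simp only [List.getD_eq_getElem _ _ hj, List.getD_eq_getElem _ _ (hij.trans_lt hj)]
    exact hl.getElem_ge_getElem_of_le hij
  · show l.getD j 0 ≤ l.getD i 0
    rw [List.getD_eq_default _ _ (not_lt.mp hj)]
    exact Nat.zero_le _

theorem hookCount_one_eq_card_filter {l : List ℕ} (hl : Antitone (l.getD · 0)) :
    hookCount l 1 = #{i ∈ range l.length | l.getD (i + 1) 0 < l.getD i 0} := by
  have leg_eq_nil (i j : ℕ) :
      (List.range l.length).filter (fun i' => i < i' ∧ j < l.getD i' 0) = [] ↔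
        l.getD (i + 1) 0 ≤ j := by
    simp only [List.filter_eq_nil_iff, List.mem_range, decide_eq_true_eq, not_and, not_lt]
    refine ⟨fun h => ?_, fun h i' _ hi' => (hl hi').trans h⟩
    by_cases hi : i + 1 < l.length
    · exact h _ hi (Nat.lt_succ_self i)
    · rw [List.getD_eq_default _ _ (not_lt.mp hi)]
      exact Nat.zero_le _
  have mem_iff (i j : ℕ) : (i, j) ∈ (range l.length ×ˢ range (l.getD 0 0)).filter
      (fun p => p.2 < l.getD p.1 0 ∧ (l.getD p.1 0 - p.2) +
        ((List.range l.length).filter (fun i' => p.1 < i' ∧ p.2 < l.getD i' 0)).length = 1) ↔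
      i < l.length ∧ j + 1 = l.getD i 0 ∧ l.getD (i + 1) 0 ≤ j := by
    simp only [mem_filter, mem_product, mem_range, Nat.add_eq_one_iff, List.length_eq_zero_iff,
      leg_eq_nil]
    have := hl (Nat.zero_le i)
    grind
  rw [hookCount]
  refine card_nbij' Prod.fst (fun i => (i, l.getD i 0 - 1)) ?_ ?_ ?_ (fun _ _ => rfl)
  · rintro ⟨i, j⟩ h
    rw [mem_coe, mem_iff] at h
    simp only [coe_filter, mem_range, Set.mem_ofPred]
    omega
  · intro i h
    simp only [coe_filter, mem_range, Set.mem_ofPred] at h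
    rw [mem_coe, mem_iff]
    omega
  · rintro ⟨i, j⟩ h
    rw [mem_coe, mem_iff] at h
    simp only [Prod.mk.injEq, true_and]
    omega

theorem card_filter_getD_succ_lt_eq_card_toFinset {l : List ℕ} (hl : Antitone (l.getD · 0))
    (hpos : ∀ x ∈ l, 0 < x) :
    #{i ∈ range l.length | l.getD (i + 1) 0 < l.getD i 0} = l.toFinset.card := by
  have getD_mem {i : ℕ} (hi : i < l.length) : l.getD i 0 ∈ l := by
    rw [List.getD_eq_getElem _ _ hi]
    exact List.getElem_mem hi
  have lt_of_lt (i i' : ℕ) (hi : l.getD (i + 1) 0 < l.getD i 0) (h : i < i') :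
      l.getD i' 0 < l.getD i 0 :=
    (hl h).trans_lt hi
  refine card_bij (fun i _ => l.getD i 0) ?_ ?_ ?_
  · intro i hi
    simp only [mem_filter, mem_range] at hi
    exact List.mem_toFinset.mpr (getD_mem hi.1)
  · simp only [mem_filter, mem_range]
    intro i hi i' hi' h
    rcases lt_trichotomy i i' with h' | h' | h'
    · exact absurd h (lt_of_lt i i' hi.2 h').ne'
    · exact h'
    · exact absurd h (lt_of_lt i' i hi'.2 h').ne
  · intro v hv
    rw [List.mem_toFinset] at hv
    -- the last row of length `v` ends in a corner
    set S : Finset ℕ := {i ∈ range l.length | l.getD i 0 = v}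
    have hne : S.Nonempty := by
      obtain ⟨i, hi, rfl⟩ := List.mem_iff_getElem.mp hv
      exact ⟨i, by simp [S, hi]⟩
    obtain ⟨hi₀, hvi₀⟩ := mem_filter.mp (S.max'_mem hne)
    have hle : l.getD (S.max' hne + 1) 0 ≤ v := hvi₀ ▸ hl (Nat.le_succ _)
    refine ⟨S.max' hne, mem_filter.mpr ⟨hi₀, hvi₀ ▸ hle.lt_of_ne fun heq => ?_⟩, hvi₀⟩
    have hsucc : S.max' hne + 1 < l.length := by
      by_contra! h
      rw [List.getD_eq_default _ _ h] at heq
      exact (hpos v hv).ne heq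
    have := S.le_max' _ (mem_filter.mpr ⟨mem_range.mpr hsucc, heq⟩)
    omega

theorem hookCount_one_sort_reverse {n : ℕ} (p : n.Partition) :
    hookCount ((p.parts.sort (· ≤ ·)).reverse) 1 = #p.parts.toFinset := by
  have hsorted : (p.parts.sort (· ≤ ·)).reverse.SortedGE :=
    (p.parts.pairwise_sort _).sortedLE.reverse
  rw [hookCount_one_eq_card_filter hsorted.antitone_getD,
    card_filter_getD_succ_lt_eq_card_toFinset hsorted.antitone_getD
      fun x hx => p.parts_pos (by simpa using hx)]
  congr 1
  ext
  simp

namespace Nat.Partition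

theorem card_filter_mem_parts_restricted {n k : ℕ} {P : ℕ → Prop} [DecidablePred P]
    (hk : 1 ≤ k) (hkn : k ≤ n) (hP : P k) :
    #{p ∈ restricted n P | k ∈ p.parts} = #(restricted (n - k) P) := by
  let e := partitionWithPartEquiv hk hkn
  refine card_bij' (fun p hp => e ⟨p, (mem_filter.mp hp).2⟩) (fun q _ => (e.symm q).1)
    ?_ ?_ (fun p _ => by simp) (fun q _ => by simp)
  · intro p hp
    simp only [restricted, mem_filter, mem_univ, true_and] at hp ⊢
    simp only [e, partitionWithPartEquiv_apply_parts]
    exact fun i hi => hp.1 i (Multiset.mem_of_mem_erase hi)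
  · intro q hq
    simp only [restricted, mem_filter, mem_univ, true_and] at hq ⊢
    simp only [e, partitionWithPartEquiv_symm_apply_parts]
    exact ⟨Multiset.forall_mem_cons.mpr ⟨hP, hq⟩, Multiset.mem_cons_self k q.parts⟩

theorem sum_card_toFinset_parts_restricted (n : ℕ) (P : ℕ → Prop) [DecidablePred P] :
    ∑ p ∈ restricted n P, #p.parts.toFinset =
      ∑ k ∈ Icc 1 n with P k, #(restricted (n - k) P) := by
  have card_toFinset_parts : ∀ p ∈ restricted n P,
      #p.parts.toFinset = ∑ k ∈ Icc 1 n with P k, if k ∈ p.parts then 1 else 0 := by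
    intro p hp
    rw [sum_boole, Nat.cast_id]
    congr 1
    ext k
    simp only [restricted, mem_filter, mem_univ, true_and] at hp
    simp only [Multiset.mem_toFinset, mem_filter, mem_Icc]
    exact ⟨fun h => ⟨⟨⟨p.parts_pos h, p.le_of_mem_parts h⟩, hp k h⟩, h⟩, fun h => h.2⟩
  rw [sum_congr rfl card_toFinset_parts, sum_comm]
  refine sum_congr rfl fun k hk => ?_
  simp only [mem_filter, mem_Icc] at hk
  rw [sum_boole, Nat.cast_id, card_filter_mem_parts_restricted hk.1.1 hk.1.2 hk.2]

end Nat.Partition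

theorem b_two_one_eq (n : ℕ) :
    b 2 1 n = ∑ k ∈ Icc 1 n with ¬Even k, #(Nat.Partition.odds (n - k)) := by
  have : univ.filter (fun p : n.Partition => ∀ i ∈ p.parts, ¬2 ∣ i) = Nat.Partition.odds n := by
    simp [Nat.Partition.odds, Nat.Partition.restricted, even_iff_two_dvd]
  rw [b, this]
  simp_rw [hookCount_one_sort_reverse]
  exact Nat.Partition.sum_card_toFinset_parts_restricted n _

theorem prod_range_two_mul_ite_not_even {M : Type*} [CommMonoid M] (g : ℕ → M) (n : ℕ) :
    ∏ i ∈ range (2 * n), (if ¬Even (i + 1) then g (i + 1) else 1) =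
      ∏ m ∈ range n, g (2 * m + 1) := by
  induction n with
  | zero => simp
  | succ n ih =>
    rw [show 2 * (n + 1) = 2 * n + 1 + 1 by ring, prod_range_succ, prod_range_succ, ih,
      prod_range_succ]
    simp [parity_simps]

namespace PowerSeries

open scoped WithPiTopology

theorem tsum_X_pow_mul_eq_inv {K : Type*} [Field K] [TopologicalSpace K] [IsTopologicalRing K]
    [T2Space K] {k : ℕ} (hk : k ≠ 0) : ∑' j, (X : K⟦X⟧) ^ (k * j) = (1 - X ^ k)⁻¹ := by
  simp_rw [pow_mul]
  rw [eq_inv_iff_mul_eq_one (by simp [hk])]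
  exact WithPiTopology.tsum_pow_mul_one_sub_of_constantCoeff_eq_zero (by simp [hk])

theorem coeff_eq_coeff_prod_of_hasProd {R ι : Type*} [CommRing R] [TopologicalSpace R]
    [T2Space R] {f : ι → R⟦X⟧} {a : R⟦X⟧} (h : HasProd f a) (s : Finset ι) (d : ℕ)
    (hf : ∀ i ∉ s, X ^ (d + 1) ∣ f i - 1) : coeff d a = coeff d (∏ i ∈ s, f i) := by
  classical
  refine tendsto_nhds_unique (((WithPiTopology.continuous_coeff R d).tendsto a).comp h)
    (tendsto_atTop_of_eventually_const fun t (hst : s ⊆ t) => ?_)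
  have htail : X ^ (d + 1) ∣ ∏ i ∈ t \ s, f i - 1 := by
    rw [← Ideal.mem_span_singleton, ← Ideal.Quotient.eq, map_prod, map_one]
    exact prod_eq_one fun i hi => Ideal.Quotient.eq.mpr <|
      Ideal.mem_span_singleton.mpr (hf i (mem_sdiff.mp hi).2)
  obtain ⟨g, hg⟩ := htail
  rw [Function.comp_apply, ← prod_sdiff hst, eq_add_of_sub_eq hg, add_mul, one_mul, map_add,
    mul_assoc, coeff_X_pow_mul', if_neg (by omega), zero_add]

theorem coeff_prod_inv_one_sub_X_pow_odd {K : Type*} [Field K] {d M : ℕ} (hd : d ≤ 2 * M) :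
    coeff d (∏ m ∈ range M, (1 - X ^ (2 * m + 1))⁻¹ : K⟦X⟧) = #(Nat.Partition.odds d) := by
  -- any topology on `K` gives access to the infinite product; the discrete one is the simplest
  let _ : TopologicalSpace K := ⊥
  have : DiscreteTopology K := ⟨rfl⟩
  have h := Nat.Partition.hasProd_powerSeriesMk_card_restricted K (¬Even ·)
  simp_rw [tsum_X_pow_mul_eq_inv (Nat.succ_ne_zero _)] at h
  rw [← prod_range_two_mul_ite_not_even (fun k => (1 - X ^ k)⁻¹),
    ← coeff_eq_coeff_prod_of_hasProd h, coeff_mk]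
  · rfl
  intro i hi
  rw [mem_range, not_lt] at hi
  split_ifs
  · simp
  · refine (pow_dvd_pow X (by omega : d + 1 ≤ i + 1)).trans ⟨(1 - X ^ (i + 1))⁻¹, ?_⟩
    have : (1 - X ^ (i + 1) : K⟦X⟧)⁻¹ * (1 - X ^ (i + 1)) = 1 :=
      PowerSeries.inv_mul_cancel _ (by simp)
    linear_combination this

theorem X_mul_inv_one_sub_X_sub_X_sq_mul_inv_one_sub_X_sq {K : Type*} [Field K] :
    (X : K⟦X⟧) * (1 - X)⁻¹ - X ^ 2 * (1 - X ^ 2)⁻¹ = mk fun j => if Odd j then 1 else 0 := by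
  have h1 : (1 - X : K⟦X⟧)⁻¹ * (1 - X) = 1 := PowerSeries.inv_mul_cancel _ (by simp)
  have h2 : (1 - X ^ 2 : K⟦X⟧)⁻¹ * (1 - X ^ 2) = 1 := PowerSeries.inv_mul_cancel _ (by simp)
  refine mul_right_cancel₀ (b := 1 - X ^ 2) (fun h => by simpa using congrArg constantCoeff h) ?_
  have lhs : ((X : K⟦X⟧) * (1 - X)⁻¹ - X ^ 2 * (1 - X ^ 2)⁻¹) * (1 - X ^ 2) = X := by
    linear_combination (X * (1 + X)) * h1 - X ^ 2 * h2
  rw [lhs]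
  ext n
  rw [mul_sub, mul_one, map_sub, coeff_mul_X_pow', coeff_mk, coeff_X]
  rcases n with _ | _ | n <;> simp [parity_simps]

end PowerSeries

theorem stmt6 : ∀ n : ℕ,
    (PowerSeries.coeff (R := ℚ) n) (PowerSeries.mk fun m => (b 2 1 m : ℚ)) =
      (PowerSeries.coeff (R := ℚ) n)
        ((∏ m ∈ Finset.range (n + 1), (1 - (X : ℚ⟦X⟧) ^ (2 * m + 1))⁻¹) *
          (X * (1 - X)⁻¹ - X ^ 2 * (1 - X ^ 2)⁻¹)) := by
  intro n
  have odd_eq : ({k ∈ range (n + 1) | Odd k} : Finset ℕ) = {k ∈ Icc 1 n | ¬Even k} := by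
    ext k
    simp only [mem_filter, mem_range, mem_Icc, Nat.not_even_iff_odd]
    exact ⟨fun ⟨_, ho⟩ => ⟨⟨ho.pos, by omega⟩, ho⟩, fun ⟨_, ho⟩ => ⟨by omega, ho⟩⟩
  rw [X_mul_inv_one_sub_X_sub_X_sq_mul_inv_one_sub_X_sq, coeff_mul,
    Nat.sum_antidiagonal_eq_sum_range_succ_mk, ← sum_range_reflect, coeff_mk, b_two_one_eq,
    ← odd_eq, sum_filter]
  push_cast
  refine sum_congr rfl fun k hk => ?_
  rw [mem_range] at hk
  rw [coeff_mk, coeff_prod_inv_one_sub_X_pow_odd (by omega), mul_ite, mul_one, mul_zero,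
    Nat.sub_sub_self (by omega : k ≤ n)]
end

section
/- Sylvester's identity: as formal power series in q with parameter x, ∏_{m≥1}(1+xq^m) = ∑_{n≥0} [(−xq;q)_n / (q;q)_n] · (1 + x q^{2n+1}) · x^n q^{n(3n+1)/2}, where (a;q)_n = ∏_{i=0}^{n−1}(1 − a q^i). -/
/-!
Sylvester's identity is the limit `M → ∞` of the finite identity
`(-xq;q)_M = ∑ₙ xⁿ q^(n(3n+1)/2) (-xq;q)ₙ ([M-n, n]_q + x q^(2n+1) [M-1-n, n]_q)`,
where `[a, b]_q` is the Gaussian binomial coefficient.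
This is proved by induction on `M`: passing from `M` to `M + 1` multiplies the right side by
`1 + x q^(M+1)` term by term, up to a telescoping defect, using only the two Pascal recurrences
of the Gaussian binomials. Since `(q;q)ₙ [a+n, n]_q = (q^(a+1);q)ₙ ≡ 1 mod q^(a+1)`, the
Gaussian binomials agree with `1 / (q;q)ₙ` up to order `q^(M-2n)`, and the factor `q^(n(3n+1)/2)`
pushes the error past `q^(M-1)`. So for `M = N + 1` the two sides of the finite identity have the
same `N`-th coefficients as the two sides of Sylvester's identity.
-/

open Finset PowerSeries

section QAnalogues

variable {R : Type*} [CommRing R]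

def qPochhammer (a q : R) (n : ℕ) : R := ∏ i ∈ range n, (1 - a * q ^ i)

def gaussBinom (q : R) : ℕ → ℕ → R
  | _, 0 => 1
  | 0, _ + 1 => 0
  | a + 1, b + 1 => gaussBinom q a b + q ^ (b + 1) * gaussBinom q a (b + 1)

variable (q : R)

lemma qPochhammer_succ (a : R) (n : ℕ) :
    qPochhammer a q (n + 1) = qPochhammer a q n * (1 - a * q ^ n) :=
  prod_range_succ _ _

lemma qPochhammer_self_eq_prod (n : ℕ) :
    qPochhammer q q n = ∏ i ∈ range n, (1 - q ^ (i + 1)) := by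
  simp only [qPochhammer, pow_succ']

lemma qPochhammer_neg_mul_eq_prod (x : R) (n : ℕ) :
    qPochhammer (-(x * q)) q n = ∏ i ∈ range n, (1 + x * q ^ (i + 1)) :=
  prod_congr rfl fun _ _ => by ring

lemma dvd_qPochhammer_sub_one (a : R) (n : ℕ) : a ∣ qPochhammer a q n - 1 := by
  induction n with
  | zero => simp [qPochhammer]
  | succ n ih =>
    rw [qPochhammer_succ, show qPochhammer a q n * (1 - a * q ^ n) - 1 =
      (qPochhammer a q n - 1) * (1 - a * q ^ n) - a * q ^ n by ring]
    exact dvd_sub (dvd_mul_of_dvd_left ih _) (dvd_mul_right a _)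

@[simp] lemma gaussBinom_zero_right (a : ℕ) : gaussBinom q a 0 = 1 := by
  cases a <;> rfl

@[simp] lemma gaussBinom_zero_succ (b : ℕ) : gaussBinom q 0 (b + 1) = 0 := rfl

lemma gaussBinom_succ_succ (a b : ℕ) :
    gaussBinom q (a + 1) (b + 1) = gaussBinom q a b + q ^ (b + 1) * gaussBinom q a (b + 1) :=
  rfl

/-- The second Pascal recurrence `[a+1, b+1] = [a, b+1] + q^(a-b) [a, b]`, multiplied by `q ^ b`
so that no truncated exponent `a - b` occurs. -/
lemma pow_mul_gaussBinom_succ_succ (a b : ℕ) :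
    q ^ b * gaussBinom q (a + 1) (b + 1) =
      q ^ b * gaussBinom q a (b + 1) + q ^ a * gaussBinom q a b := by
  induction a generalizing b with
  | zero => cases b <;> simp [gaussBinom_succ_succ]
  | succ a ih =>
    cases b with
    | zero =>
      have h := ih 0
      simp only [gaussBinom_succ_succ, gaussBinom_zero_right] at h ⊢
      linear_combination q * h
    | succ c =>
      have h₀ := ih c
      have h₁ := ih (c + 1)
      simp only [gaussBinom_succ_succ] at h₀ h₁ ⊢
      linear_combination q * h₀ + q ^ (c + 2) * h₁

lemma one_sub_pow_mul_gaussBinom_succ_succ (a b : ℕ) :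
    (1 - q ^ (b + 1)) * gaussBinom q (a + 1) (b + 1) = (1 - q ^ (a + 1)) * gaussBinom q a b := by
  linear_combination gaussBinom_succ_succ q a b - q * pow_mul_gaussBinom_succ_succ q a b

lemma qPochhammer_mul_gaussBinom (a b : ℕ) :
    qPochhammer q q b * gaussBinom q (a + b) b = qPochhammer (q ^ (a + 1)) q b := by
  induction b with
  | zero => simp [qPochhammer]
  | succ b ih =>
    rw [qPochhammer_succ, qPochhammer_succ, ← add_assoc]
    linear_combination qPochhammer q q b * one_sub_pow_mul_gaussBinom_succ_succ q (a + b) b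
      + (1 - q ^ (a + 1) * q ^ b) * ih

lemma gaussBinom_sub_succ_succ (s b : ℕ) :
    gaussBinom q (s + 1 - b) (b + 1) =
      gaussBinom q (s - b) b + q ^ (b + 1) * gaussBinom q (s - b) (b + 1) := by
  rcases le_or_gt b s with h | h
  · rw [show s + 1 - b = s - b + 1 by omega, gaussBinom_succ_succ]
  · obtain ⟨c, rfl⟩ : ∃ c, b = c + 1 := ⟨b - 1, by omega⟩
    simp [show s + 1 - (c + 1) = 0 by omega, show s - (c + 1) = 0 by omega]

lemma pow_mul_gaussBinom_sub_succ_succ (s b : ℕ) :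
    q ^ (2 * b) * gaussBinom q (s + 1 - b) (b + 1) =
      q ^ (2 * b) * gaussBinom q (s - b) (b + 1) + q ^ s * gaussBinom q (s - b) b := by
  rcases le_or_gt b s with h | h
  · obtain ⟨t, rfl⟩ : ∃ t, s = t + b := ⟨s - b, by omega⟩
    rw [show t + b + 1 - b = t + 1 by omega, show t + b - b = t by omega]
    linear_combination q ^ b * pow_mul_gaussBinom_succ_succ q t b
  · obtain ⟨c, rfl⟩ : ∃ c, b = c + 1 := ⟨b - 1, by omega⟩
    simp [show s + 1 - (c + 1) = 0 by omega, show s - (c + 1) = 0 by omega]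

end QAnalogues

section FiniteSylvester

variable {R : Type*} [CommRing R] (q x : R)

def sylvesterWeight (n : ℕ) : R :=
  x ^ n * q ^ (n * (3 * n + 1) / 2) * qPochhammer (-(x * q)) q n

def sylvesterTerm (m n : ℕ) : R :=
  sylvesterWeight q x n *
    (gaussBinom q (m + 1 - n) n + x * q ^ (2 * n + 1) * gaussBinom q (m - n) n)

/-- By `gaussBinom_sub_succ_succ` this is `x q^(m+3)` times `sylvesterWeight q x n` times
`[m + 1 - n, n - 1]_q` for `n ≥ 1`, and it vanishes at `n = 0`. -/
def sylvesterDefect (m n : ℕ) : R :=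
  x * q ^ (m + 3) * sylvesterWeight q x n *
    (gaussBinom q (m + 2 - n) n - q ^ n * gaussBinom q (m + 1 - n) n)

lemma sylvesterWeight_succ (n : ℕ) :
    sylvesterWeight q x (n + 1) =
      sylvesterWeight q x n * (x * q ^ (3 * n + 2) * (1 + x * q ^ (n + 1))) := by
  have h : (n + 1) * (3 * (n + 1) + 1) / 2 = n * (3 * n + 1) / 2 + (3 * n + 2) := by
    rw [show (n + 1) * (3 * (n + 1) + 1) = n * (3 * n + 1) + (3 * n + 2) * 2 by ring,
      Nat.add_mul_div_right _ _ two_pos]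
  rw [sylvesterWeight, sylvesterWeight, h, qPochhammer_succ]
  ring

lemma pow_two_mul_dvd_sylvesterWeight (n : ℕ) : q ^ (2 * n) ∣ sylvesterWeight q x n := by
  have h : 2 * n ≤ n * (3 * n + 1) / 2 := by
    rw [Nat.le_div_iff_mul_le two_pos]
    rcases n with _ | n
    · simp
    · nlinarith
  exact dvd_mul_of_dvd_left (dvd_mul_of_dvd_right (pow_dvd_pow q h) _) _

lemma sylvesterTerm_succ_succ (m n : ℕ) :
    sylvesterTerm q x (m + 2) (n + 1) =
      sylvesterTerm q x (m + 1) (n + 1) + x * q ^ (m + 3) * sylvesterTerm q x (m + 1) n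
        + (sylvesterDefect q x m (n + 1) - sylvesterDefect q x m n) := by
  have e₁ := pow_mul_gaussBinom_sub_succ_succ q (m + 1) n
  have e₂ := pow_mul_gaussBinom_sub_succ_succ q m n
  have e₃ := gaussBinom_sub_succ_succ q m n
  simp only [sylvesterTerm, sylvesterDefect, sylvesterWeight_succ, Nat.reduceSubDiff]
  linear_combination (sylvesterWeight q x n * x * q ^ (n + 2) * (1 + x * q ^ (n + 1))) * e₁
    + (sylvesterWeight q x n * x * q ^ (n + 2) * (1 + x * q ^ (n + 1)) * x * q ^ (2 * n + 3)) * e₂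
    - (sylvesterWeight q x n * x ^ 2 * (1 + x * q ^ (n + 1)) * q ^ (3 * n + m + 5)) * e₃

lemma sum_sylvesterTerm_succ_succ (m : ℕ) :
    ∑ n ∈ range (m + 3), sylvesterTerm q x (m + 2) n =
      (1 + x * q ^ (m + 3)) * ∑ n ∈ range (m + 2), sylvesterTerm q x (m + 1) n := by
  have h₀ : sylvesterTerm q x (m + 2) 0 = sylvesterTerm q x (m + 1) 0 := by
    simp [sylvesterTerm]
  have htop : sylvesterTerm q x (m + 1) (m + 2) = 0 := by
    simp [sylvesterTerm]
  have htel : sylvesterDefect q x m (m + 2) - sylvesterDefect q x m 0 = 0 := by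
    simp [sylvesterDefect]
  rw [sum_range_succ', h₀]
  simp only [sylvesterTerm_succ_succ, sum_add_distrib, ← mul_sum, sum_range_sub, htel]
  rw [sum_range_succ (fun n => sylvesterTerm q x (m + 1) (n + 1)), htop,
    sum_range_succ' (sylvesterTerm q x (m + 1)) (m + 1)]
  ring

theorem sum_sylvesterTerm (m : ℕ) :
    ∑ n ∈ range (m + 1), sylvesterTerm q x m n = qPochhammer (-(x * q)) q (m + 1) := by
  induction m using Nat.twoStepInduction with
  | zero => simp [sylvesterTerm, sylvesterWeight, qPochhammer]
  | one =>
    simp [sylvesterTerm, sylvesterWeight, qPochhammer, sum_range_succ, prod_range_succ,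
      gaussBinom_succ_succ]
    ring
  | more m _ ih =>
    rw [sum_sylvesterTerm_succ_succ, ih, qPochhammer_succ q _ (m + 2)]
    ring

end FiniteSylvester

section PowerSeries

variable {k : Type*} [Field k]

lemma coeff_eq_of_X_pow_succ_dvd_sub {R : Type*} [CommRing R] {f g : R⟦X⟧} {N : ℕ}
    (h : X ^ (N + 1) ∣ f - g) : coeff N f = coeff N g := by
  rw [← sub_eq_zero, ← map_sub]
  exact X_pow_dvd_iff.mp h N N.lt_succ_self

lemma constantCoeff_qPochhammer_X (n : ℕ) :
    constantCoeff (qPochhammer (X : k⟦X⟧) X n) = 1 := by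
  simp [qPochhammer, map_prod]

lemma X_pow_dvd_X_pow_mul_gaussBinom_sub_inv (s b : ℕ) :
    (X : k⟦X⟧) ^ (s + 1) ∣
      X ^ (2 * b) * (gaussBinom X (s - b) b - (qPochhammer X X b)⁻¹) := by
  rcases lt_or_ge s (2 * b) with h | h
  · exact dvd_mul_of_dvd_left (pow_dvd_pow X h) _
  obtain ⟨a, rfl⟩ : ∃ a, s = a + 2 * b := ⟨s - 2 * b, by omega⟩
  have hinv : (qPochhammer (X : k⟦X⟧) X b)⁻¹ * qPochhammer X X b = 1 :=
    PowerSeries.inv_mul_cancel _ (by simp [constantCoeff_qPochhammer_X])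
  have hsub : gaussBinom X (a + 2 * b - b) b - (qPochhammer (X : k⟦X⟧) X b)⁻¹ =
      (qPochhammer X X b)⁻¹ * (qPochhammer (X ^ (a + 1)) X b - 1) := by
    rw [show a + 2 * b - b = a + b by omega, ← qPochhammer_mul_gaussBinom, mul_sub, ← mul_assoc,
      hinv, one_mul, mul_one]
  rw [hsub, show a + 2 * b + 1 = 2 * b + (a + 1) by ring, pow_add]
  exact mul_dvd_mul_left _ (dvd_mul_of_dvd_right (dvd_qPochhammer_sub_one _ _ _) _)

lemma X_pow_dvd_sylvesterTerm_sub (x : k⟦X⟧) (N n : ℕ) :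
    X ^ (N + 1) ∣ sylvesterTerm X x N n -
      sylvesterWeight X x n * (qPochhammer X X n)⁻¹ * (1 + x * X ^ (2 * n + 1)) := by
  obtain ⟨d, hd⟩ := pow_two_mul_dvd_sylvesterWeight X x n
  have h₁ := X_pow_dvd_X_pow_mul_gaussBinom_sub_inv (k := k) (N + 1) n
  have h₂ := X_pow_dvd_X_pow_mul_gaussBinom_sub_inv (k := k) N n
  have hsplit : sylvesterTerm X x N n -
        sylvesterWeight X x n * (qPochhammer X X n)⁻¹ * (1 + x * X ^ (2 * n + 1)) =
      d * (X ^ (2 * n) * (gaussBinom X (N + 1 - n) n - (qPochhammer X X n)⁻¹)) +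
        d * x * X ^ (2 * n + 1) *
          (X ^ (2 * n) * (gaussBinom X (N - n) n - (qPochhammer X X n)⁻¹)) := by
    rw [sylvesterTerm, hd]
    ring
  rw [hsplit]
  exact dvd_add (dvd_mul_of_dvd_right ((pow_dvd_pow X (N + 1).le_succ).trans h₁) _)
    (dvd_mul_of_dvd_right h₂ _)

end PowerSeries

theorem stmt10 : ∀ N : ℕ,
    (PowerSeries.coeff (R := RatFunc ℚ) N)
        (∏ m ∈ Finset.range (N + 1),
          (1 + PowerSeries.C (R := RatFunc ℚ) RatFunc.X * X ^ (m + 1))) =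
      (PowerSeries.coeff (R := RatFunc ℚ) N)
        (∑ n ∈ Finset.range (N + 1),
          (∏ i ∈ Finset.range n, (1 + PowerSeries.C (R := RatFunc ℚ) RatFunc.X * X ^ (i + 1))) *
            (∏ i ∈ Finset.range n, (1 - (X : (RatFunc ℚ)⟦X⟧) ^ (i + 1)))⁻¹ *
            (1 + PowerSeries.C (R := RatFunc ℚ) RatFunc.X * X ^ (2 * n + 1)) *
            (PowerSeries.C (R := RatFunc ℚ) RatFunc.X) ^ n * X ^ (n * (3 * n + 1) / 2)) := by
  intro N
  set x := PowerSeries.C (R := RatFunc ℚ) RatFunc.X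
  rw [← qPochhammer_neg_mul_eq_prod, ← sum_sylvesterTerm, map_sum, map_sum]
  refine sum_congr rfl fun n _ => coeff_eq_of_X_pow_succ_dvd_sub ?_
  convert X_pow_dvd_sylvesterTerm_sub x N n using 2
  rw [sylvesterWeight, qPochhammer_neg_mul_eq_prod, qPochhammer_self_eq_prod]
  ring
end

section
/- The coefficient of qⁿ in (1−q)·∏_{m≥3}(1+q^m) is nonnegative for every n ≥ 2; equivalently, d_3(n) − d_3(n−1) ≥ 0 for n ≥ 2. -/
open Finset PowerSeries

/-!
A partition into distinct parts is a finite set of naturals. Expanding `∏_{3 ≤ m ≤ n+3} (1 + q^m)`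
over subsets shows that its `q^k`-coefficient is `d_3(k)` for `k ≤ n`, so the `q^n`-coefficient of
`(1 - q) ∏ (1 + q^m)` is `d_3(n) - d_3(n-1)`. For `n ≥ 2` a partition of `n - 1` has a largest
part, and raising it by one injects the partitions of `n - 1` into those of `n`, keeping the parts
distinct and at least `3`.
-/

def distinctPartsAtLeast (a k : ℕ) : Finset (Finset ℕ) :=
  (range (k + 1)).powerset.filter fun S ↦ (∀ i ∈ S, a ≤ i) ∧ ∑ i ∈ S, i = k

theorem mem_distinctPartsAtLeast {a k : ℕ} {S : Finset ℕ} :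
    S ∈ distinctPartsAtLeast a k ↔ (∀ i ∈ S, a ≤ i) ∧ ∑ i ∈ S, i = k := by
  simp only [distinctPartsAtLeast, mem_filter, mem_powerset, and_iff_right_iff_imp]
  rintro ⟨-, rfl⟩ i hi
  exact mem_range_succ_iff.mpr (single_le_sum (f := fun i ↦ i) (fun _ _ ↦ Nat.zero_le _) hi)

theorem card_partition_nodup_atLeast {a : ℕ} (ha : 0 < a) (k : ℕ) :
    #{p : k.Partition | p.parts.Nodup ∧ ∀ i ∈ p.parts, a ≤ i} =
      #(distinctPartsAtLeast a k) := by
  refine card_bij' (fun p hp ↦ ⟨p.parts, (mem_filter.mp hp).2.1⟩)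
    (fun S hS ↦ ⟨S.val, fun hi ↦ ha.trans_le ((mem_distinctPartsAtLeast.mp hS).1 _ hi),
      (sum_val S).trans (mem_distinctPartsAtLeast.mp hS).2⟩)
    ?_ ?_ (fun _ _ ↦ rfl) (fun _ _ ↦ rfl)
  · intro p hp
    obtain ⟨-, -, hge⟩ := mem_filter.mp hp
    exact mem_distinctPartsAtLeast.mpr ⟨hge, (sum_val _).symm.trans p.parts_sum⟩
  · intro S hS
    exact mem_filter.mpr ⟨mem_univ _, S.nodup, (mem_distinctPartsAtLeast.mp hS).1⟩

theorem d3_eq_card_distinctPartsAtLeast (k : ℕ) : d3 k = #(distinctPartsAtLeast 3 k) :=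
  card_partition_nodup_atLeast (by norm_num) k

def raiseMax (S : Finset ℕ) : Finset ℕ :=
  insert (S.sup id + 1) (S.erase (S.sup id))

theorem sup_id_add_one_notMem_erase (S : Finset ℕ) : S.sup id + 1 ∉ S.erase (S.sup id) :=
  fun h ↦ Nat.not_succ_le_self _ (le_sup (f := id) (mem_of_mem_erase h))

theorem sup_id_mem {S : Finset ℕ} (hS : S.Nonempty) : S.sup id ∈ S := by
  obtain ⟨i, hi, hsup⟩ := exists_mem_eq_sup S hS id
  exact hsup ▸ hi

theorem sum_raiseMax {S : Finset ℕ} (hS : S.Nonempty) :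
    ∑ i ∈ raiseMax S, i = ∑ i ∈ S, i + 1 := by
  rw [raiseMax, sum_insert (sup_id_add_one_notMem_erase S), ← add_sum_erase S _ (sup_id_mem hS)]
  ring

theorem sup_raiseMax (S : Finset ℕ) : (raiseMax S).sup id = S.sup id + 1 := by
  refine le_antisymm (Finset.sup_le fun i hi ↦ ?_) (le_sup (f := id) (mem_insert_self _ _))
  rcases mem_insert.mp hi with rfl | hi
  · rfl
  · exact (le_sup (f := id) (mem_of_mem_erase hi)).trans (Nat.le_succ _)

theorem raiseMax_injOn : Set.InjOn raiseMax {S | S.Nonempty} := by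
  intro S hS T hT hST
  have hsup : S.sup id = T.sup id := by
    simpa only [sup_raiseMax, add_left_inj] using congrArg (·.sup id) hST
  have herase : S.erase (S.sup id) = T.erase (T.sup id) :=
    calc S.erase (S.sup id) = (raiseMax S).erase (S.sup id + 1) :=
          (erase_insert (sup_id_add_one_notMem_erase S)).symm
      _ = (raiseMax T).erase (T.sup id + 1) := by rw [hST, hsup]
      _ = T.erase (T.sup id) := erase_insert (sup_id_add_one_notMem_erase T)
  rw [← insert_erase (sup_id_mem hS), ← insert_erase (sup_id_mem hT), herase, hsup]

theorem card_distinctPartsAtLeast_le_succ (a : ℕ) {k : ℕ} (hk : k ≠ 0) :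
    #(distinctPartsAtLeast a k) ≤ #(distinctPartsAtLeast a (k + 1)) := by
  have hne : ∀ S ∈ distinctPartsAtLeast a k, S.Nonempty := fun S hS ↦
    nonempty_iff_ne_empty.mpr fun h ↦
      hk (by simpa [h] using (mem_distinctPartsAtLeast.mp hS).2.symm)
  refine card_le_card_of_injOn raiseMax (fun S hS ↦ ?_) (raiseMax_injOn.mono hne)
  obtain ⟨hge, hsum⟩ := mem_distinctPartsAtLeast.mp hS
  refine mem_distinctPartsAtLeast.mpr ⟨fun i hi ↦ ?_, hsum ▸ sum_raiseMax (hne S hS)⟩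
  rcases mem_insert.mp hi with rfl | hi
  · exact (hge _ (sup_id_mem (hne S hS))).trans (Nat.le_succ _)
  · exact hge i (mem_of_mem_erase hi)

theorem d3_le_d3_succ {k : ℕ} (hk : k ≠ 0) : d3 k ≤ d3 (k + 1) := by
  simpa only [d3_eq_card_distinctPartsAtLeast] using card_distinctPartsAtLeast_le_succ 3 hk

theorem coeff_prod_one_add_X_pow {R : Type*} [CommSemiring R] (s : Finset ℕ) (k : ℕ) :
    coeff k (∏ m ∈ s, (1 + (X : R⟦X⟧) ^ m)) =
      (#{t ∈ s.powerset | ∑ i ∈ t, i = k} : R) := by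
  simp only [prod_one_add, map_sum, prod_pow_eq_pow_sum (f := fun i ↦ i), coeff_X_pow,
    eq_comm (a := k)]
  exact sum_boole _ _

theorem filter_powerset_Ico_sum_eq {a b k : ℕ} (hk : k < b) :
    {t ∈ (Ico a b).powerset | ∑ i ∈ t, i = k} = distinctPartsAtLeast a k := by
  ext t
  simp only [mem_filter, mem_powerset, mem_distinctPartsAtLeast, subset_iff, mem_Ico]
  constructor
  · rintro ⟨h, hsum⟩
    exact ⟨fun i hi ↦ (h hi).1, hsum⟩
  · rintro ⟨h, rfl⟩
    refine ⟨fun i hi ↦ ⟨h i hi, ?_⟩, rfl⟩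
    exact (single_le_sum (f := fun i ↦ i) (fun _ _ ↦ Nat.zero_le _) hi).trans_lt hk

theorem coeff_prod_Ico_one_add_X_pow {R : Type*} [CommSemiring R] {a b k : ℕ} (hk : k < b) :
    coeff k (∏ m ∈ Ico a b, (1 + (X : R⟦X⟧) ^ m)) = (#(distinctPartsAtLeast a k) : R) := by
  rw [coeff_prod_one_add_X_pow, filter_powerset_Ico_sum_eq hk]

theorem coeff_prod_range_one_add_X_pow_add_three {n k : ℕ} (hk : k ≤ n) :
    coeff k (∏ m ∈ range (n + 1), (1 + (X : ℤ⟦X⟧) ^ (m + 3))) = (d3 k : ℤ) := by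
  rw [d3_eq_card_distinctPartsAtLeast,
    ← coeff_prod_Ico_one_add_X_pow (a := 3) (b := n + 1 + 3) (by omega), prod_Ico_eq_prod_range]
  simp only [add_comm 3, Nat.add_sub_cancel]

theorem stmt12 : ∀ n : ℕ, 2 ≤ n →
    (0 ≤ (PowerSeries.coeff (R := ℤ) n)
        ((1 - X) * ∏ m ∈ Finset.range (n + 1), (1 + (X : ℤ⟦X⟧) ^ (m + 3)))) ∧
      d3 (n - 1) ≤ d3 n := by
  intro n hn
  obtain ⟨k, rfl⟩ : ∃ k, n = k + 1 := ⟨n - 1, by omega⟩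
  have hmono : d3 k ≤ d3 (k + 1) := d3_le_d3_succ (by omega)
  refine ⟨?_, hmono⟩
  rw [sub_mul, one_mul, map_sub, coeff_succ_X_mul,
    coeff_prod_range_one_add_X_pow_add_three le_rfl,
    coeff_prod_range_one_add_X_pow_add_three (Nat.le_succ k), sub_nonneg]
  exact_mod_cast hmono
end

section
/- Every coefficient of the formal power series ∏_{m≥1}(1+q^m+q^{2m}) − (1+q+q²)(1+q²+q⁴)·∏_{m≥3}(1+q^m) is nonnegative, and the coefficients of qⁿ for 0 ≤ n ≤ 5 are zero. -/
/-! Write `A m = 1 + q^m + q^{2m}`. The first two factors `A 1 * A 2` of the 3-regular product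
are exactly `(1+q+q²)(1+q²+q⁴)`, and for `m ≥ 3` each remaining factor exceeds `1 + q^m` by
`q^{2m}`, a monomial of degree at least 6. Since factors `1 + O(q^m)` with `m > n` do not affect
the coefficient of `q^n`, that coefficient of the difference is the one of
`(1+q+q²)(1+q²+q⁴) * (∏_{m≥3} A m - ∏_{m≥3} (1 + q^m))` (products truncated), and the bracket has
nonnegative coefficients and is divisible by `q^6`. -/

open Finset PowerSeries

theorem dvd_prod_sub_prod {A ι : Type*} [CommRing A] {a : A} {s : Finset ι} {f g : ι → A}
    (h : ∀ i ∈ s, a ∣ f i - g i) : a ∣ ∏ i ∈ s, f i - ∏ i ∈ s, g i := by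
  simp only [← Ideal.mem_span_singleton, ← SModEq.sub_mem] at h ⊢
  exact SModEq.prod h

theorem Subsemiring.prod_sub_prod_mem {A ι : Type*} [CommRing A] (S : Subsemiring A)
    {s : Finset ι} {f g : ι → A} (hg : ∀ i ∈ s, g i ∈ S) (hfg : ∀ i ∈ s, f i - g i ∈ S) :
    ∏ i ∈ s, f i - ∏ i ∈ s, g i ∈ S := by
  classical
  induction s using Finset.induction with
  | empty => simp
  | @insert a s ha ih =>
    simp only [Finset.forall_mem_insert] at hg hfg
    have hfa : f a ∈ S := by simpa using S.add_mem hfg.1 hg.1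
    rw [prod_insert ha, prod_insert ha,
      show f a * ∏ i ∈ s, f i - g a * ∏ i ∈ s, g i =
        f a * (∏ i ∈ s, f i - ∏ i ∈ s, g i) + (f a - g a) * ∏ i ∈ s, g i by ring]
    exact S.add_mem (S.mul_mem hfa (ih hg.2 hfg.2)) (S.mul_mem hfg.1 (S.prod_mem hg.2))

namespace PowerSeries

variable {R : Type*}

theorem coeff_eq_of_X_pow_dvd_sub [Ring R] {n : ℕ} {f g : R⟦X⟧} (h : X ^ (n + 1) ∣ f - g) :
    coeff n f = coeff n g := by
  rw [← sub_eq_zero, ← map_sub]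
  exact X_pow_dvd_iff.mp h n n.lt_succ_self

theorem coeff_prod_range_eq_of_lt [CommRing R] {f : ℕ → R⟦X⟧} (hf : ∀ m, X ^ m ∣ f m - 1)
    {n N : ℕ} (hN : n < N) :
    coeff n (∏ m ∈ range N, f m) = coeff n (∏ m ∈ range (n + 1), f m) := by
  obtain ⟨k, rfl⟩ := Nat.exists_eq_add_of_le (Nat.succ_le_of_lt hN)
  apply coeff_eq_of_X_pow_dvd_sub
  rw [show ∏ m ∈ range (n + 1 + k), f m - ∏ m ∈ range (n + 1), f m =
      (∏ m ∈ range (n + 1), f m) * (∏ j ∈ range k, f (n + 1 + j) - ∏ _j ∈ range k, 1) by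
    rw [prod_range_add, prod_const_one]; ring]
  refine dvd_mul_of_dvd_right (dvd_prod_sub_prod fun j _ => ?_) _
  exact (pow_dvd_pow X (by omega)).trans (hf _)

def nonnegCoeffs (R : Type*) [Semiring R] [PartialOrder R] [IsOrderedRing R] :
    Subsemiring R⟦X⟧ where
  carrier := {f | ∀ n, 0 ≤ coeff n f}
  zero_mem' n := by simp
  one_mem' n := by rw [coeff_one]; split_ifs <;> simp
  add_mem' hf hg n := by rw [map_add]; exact add_nonneg (hf n) (hg n)
  mul_mem' hf hg n := by
    rw [coeff_mul]; exact sum_nonneg fun p _ => mul_nonneg (hf p.1) (hg p.2)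

theorem X_mem_nonnegCoeffs [Semiring R] [PartialOrder R] [IsOrderedRing R] :
    X ∈ nonnegCoeffs R := fun n => by rw [coeff_X]; split_ifs <;> simp

end PowerSeries

theorem stmt14 : ∀ n : ℕ,
    0 ≤ (PowerSeries.coeff (R := ℤ) n) (∏ m ∈ Finset.range (n + 1),
            (1 + (X : ℤ⟦X⟧) ^ (m + 1) + X ^ (2 * (m + 1)))) -
          (PowerSeries.coeff (R := ℤ) n) ((1 + X + X ^ 2) * (1 + X ^ 2 + X ^ 4) *
            ∏ m ∈ Finset.range (n + 1), (1 + (X : ℤ⟦X⟧) ^ (m + 3))) ∧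
      (n ≤ 5 →
        (PowerSeries.coeff (R := ℤ) n) (∏ m ∈ Finset.range (n + 1),
            (1 + (X : ℤ⟦X⟧) ^ (m + 1) + X ^ (2 * (m + 1)))) =
          (PowerSeries.coeff (R := ℤ) n) ((1 + X + X ^ 2) * (1 + X ^ 2 + X ^ 4) *
            ∏ m ∈ Finset.range (n + 1), (1 + (X : ℤ⟦X⟧) ^ (m + 3)))) := by
  intro n
  set U : ℤ⟦X⟧ := (1 + X + X ^ 2) * (1 + X ^ 2 + X ^ 4)
  set P : ℤ⟦X⟧ := ∏ m ∈ range (n + 1), (1 + X ^ (m + 3) + X ^ (2 * (m + 3)))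
  set Q : ℤ⟦X⟧ := ∏ m ∈ range (n + 1), (1 + X ^ (m + 3))
  have hA_sub_one (m : ℕ) : (X : ℤ⟦X⟧) ^ m ∣ 1 + X ^ (m + 1) + X ^ (2 * (m + 1)) - 1 :=
    ⟨X * (1 + X ^ (m + 1)), by ring⟩
  have hsplit : ∏ m ∈ range (n + 3), (1 + (X : ℤ⟦X⟧) ^ (m + 1) + X ^ (2 * (m + 1))) = U * P := by
    rw [show n + 3 = 2 + (n + 1) by omega, prod_range_add]
    simp only [prod_range_succ, prod_range_zero, U, P]
    ring_nf
  have hdiff : coeff n (∏ m ∈ range (n + 1), (1 + (X : ℤ⟦X⟧) ^ (m + 1) + X ^ (2 * (m + 1)))) -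
      coeff n (U * Q) = coeff n (U * (P - Q)) := by
    rw [← coeff_prod_range_eq_of_lt hA_sub_one (by omega : n < n + 3), hsplit, mul_sub, map_sub]
  have hfactor (m : ℕ) :
      (1 + (X : ℤ⟦X⟧) ^ (m + 3) + X ^ (2 * (m + 3))) - (1 + X ^ (m + 3)) = X ^ 6 * X ^ (2 * m) := by
    ring
  have hX : X ∈ nonnegCoeffs ℤ := X_mem_nonnegCoeffs
  have hU : U ∈ nonnegCoeffs ℤ :=
    mul_mem (add_mem (add_mem (one_mem _) hX) (pow_mem hX 2))
      (add_mem (add_mem (one_mem _) (pow_mem hX 2)) (pow_mem hX 4))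
  have hPQ : P - Q ∈ nonnegCoeffs ℤ :=
    Subsemiring.prod_sub_prod_mem _ (fun m _ => add_mem (one_mem _) (pow_mem hX _))
      fun m _ => hfactor m ▸ mul_mem (pow_mem hX _) (pow_mem hX _)
  have hdvd : X ^ 6 ∣ U * (P - Q) :=
    dvd_mul_of_dvd_right (dvd_prod_sub_prod fun m _ => hfactor m ▸ dvd_mul_right _ _) U
  exact ⟨hdiff ▸ mul_mem hU hPQ n,
    fun hn => sub_eq_zero.mp (hdiff ▸ X_pow_dvd_iff.mp hdvd n (by omega))⟩
end

section
/- Every coefficient of the formal power series ∏_{m≥1}(1+q^m+q^{2m}) is at least the corresponding coefficient of (1+q+q²)(1+q²+q⁴)·∏_{m≥3}(1+q^m). -/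
/-!
A factor `1 + q^m + q^{2m}` with `m > n` does not change the coefficient of `q^n`, so the
truncated product `∏_{m ≤ n+1} (1 + q^m + q^{2m})` may be extended to `m ≤ n + 3` and then split
as `(1 + q + q²)(1 + q² + q⁴) ∏_{3 ≤ m ≤ n+3} (1 + q^m + q^{2m})`. This dominates
`(1 + q + q²)(1 + q² + q⁴) ∏_{3 ≤ m ≤ n+3} (1 + q^m)` coefficientwise, because coefficientwise
domination between series with nonnegative coefficients is preserved by products.
-/

open Finset PowerSeries

namespace PowerSeries

section Order

variable {R : Type*} [CommSemiring R] [PartialOrder R]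

def CoeffLE (f g : R⟦X⟧) : Prop := ∀ k, coeff k f ≤ coeff k g

theorem coeffLE_refl (f : R⟦X⟧) : CoeffLE f f := fun _ => le_rfl

variable [IsOrderedRing R]

theorem CoeffLE.add {f f' g g' : R⟦X⟧} (hf : CoeffLE f f') (hg : CoeffLE g g') :
    CoeffLE (f + g) (f' + g') := fun k => by
  simpa only [map_add] using add_le_add (hf k) (hg k)

theorem coeffLE_add_right {f g : R⟦X⟧} (hg : CoeffLE 0 g) : CoeffLE f (f + g) := by
  simpa only [add_zero] using (coeffLE_refl f).add hg

theorem coeffLE_zero_X_pow (a : ℕ) : CoeffLE 0 (X ^ a : R⟦X⟧) := fun k => by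
  rw [map_zero, coeff_X_pow]
  split_ifs
  exacts [zero_le_one, le_rfl]

theorem coeffLE_zero_one_add_X_pow (a : ℕ) : CoeffLE 0 (1 + X ^ a : R⟦X⟧) := by
  simpa only [pow_zero, add_zero] using (coeffLE_zero_X_pow (R := R) 0).add (coeffLE_zero_X_pow a)

theorem CoeffLE.mul {f f' g g' : R⟦X⟧} (hf : CoeffLE f f') (hg : CoeffLE g g')
    (hg₀ : CoeffLE 0 g) (hf'₀ : CoeffLE 0 f') : CoeffLE (f * g) (f' * g') := fun k => by
  rw [coeff_mul, coeff_mul]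
  refine sum_le_sum fun p _ => mul_le_mul (hf p.1) (hg p.2) ?_ ?_
  · simpa using hg₀ p.2
  · simpa using hf'₀ p.1

theorem CoeffLE.mul_nonneg {f g : R⟦X⟧} (hf : CoeffLE 0 f) (hg : CoeffLE 0 g) :
    CoeffLE 0 (f * g) := by
  simpa only [mul_zero] using hf.mul hg (coeffLE_refl 0) hf

theorem coeffLE_zero_prod {ι : Type*} {s : Finset ι} {f : ι → R⟦X⟧}
    (hf : ∀ i ∈ s, CoeffLE 0 (f i)) : CoeffLE 0 (∏ i ∈ s, f i) := by
  classical
  induction s using Finset.induction_on with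
  | empty => simpa only [prod_empty, pow_zero] using coeffLE_zero_X_pow (R := R) 0
  | insert a s ha ih =>
    rw [prod_insert ha]
    exact (hf a (mem_insert_self a s)).mul_nonneg (ih fun i hi => hf i (mem_insert_of_mem hi))

theorem coeffLE_prod {ι : Type*} {s : Finset ι} {f g : ι → R⟦X⟧}
    (hf₀ : ∀ i ∈ s, CoeffLE 0 (f i)) (hfg : ∀ i ∈ s, CoeffLE (f i) (g i)) :
    CoeffLE (∏ i ∈ s, f i) (∏ i ∈ s, g i) := by
  classical
  induction s using Finset.induction_on with
  | empty => exact coeffLE_refl 1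
  | insert a s ha ih =>
    rw [prod_insert ha, prod_insert ha]
    have hs₀ : ∀ i ∈ s, CoeffLE 0 (f i) := fun i hi => hf₀ i (mem_insert_of_mem hi)
    have hga₀ : CoeffLE 0 (g a) := fun k =>
      (hf₀ a (mem_insert_self a s) k).trans (hfg a (mem_insert_self a s) k)
    exact (hfg a (mem_insert_self a s)).mul
      (ih hs₀ fun i hi => hfg i (mem_insert_of_mem hi)) (coeffLE_zero_prod hs₀) hga₀

end Order

section Trinomial

variable {R : Type*} [CommSemiring R]

noncomputable def trinomial (a : ℕ) : R⟦X⟧ := 1 + X ^ a + X ^ (2 * a)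

theorem coeff_mul_trinomial {n a : ℕ} (ha : n < a) (P : R⟦X⟧) :
    coeff n (P * trinomial a) = coeff n P := by
  rw [trinomial, mul_add, mul_add, mul_one, map_add, map_add, coeff_mul_X_pow',
    coeff_mul_X_pow', if_neg (by omega), if_neg (by omega), add_zero, add_zero]

theorem coeff_prod_range_trinomial_of_le {n N : ℕ} (hN : n + 1 ≤ N) :
    coeff n (∏ m ∈ range N, trinomial (m + 1) : R⟦X⟧) =
      coeff n (∏ m ∈ range (n + 1), trinomial (m + 1)) := by
  induction N, hN using Nat.le_induction with
  | base => rfl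
  | succ N hN ih => rw [prod_range_succ, coeff_mul_trinomial (by omega), ih]

variable [PartialOrder R] [IsOrderedRing R]

theorem coeffLE_zero_trinomial (a : ℕ) : CoeffLE 0 (trinomial a : R⟦X⟧) := by
  simpa only [trinomial, add_zero] using
    (coeffLE_zero_one_add_X_pow (R := R) a).add (coeffLE_zero_X_pow (2 * a))

theorem coeffLE_one_add_X_pow_trinomial (a : ℕ) :
    CoeffLE (1 + X ^ a) (trinomial a : R⟦X⟧) :=
  coeffLE_add_right (coeffLE_zero_X_pow _)

end Trinomial

end PowerSeries

theorem stmt15 : ∀ n : ℕ,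
    (PowerSeries.coeff (R := ℤ) n) ((1 + X + X ^ 2) * (1 + X ^ 2 + X ^ 4) *
        ∏ m ∈ Finset.range (n + 1), (1 + (X : ℤ⟦X⟧) ^ (m + 3))) ≤
      (PowerSeries.coeff (R := ℤ) n) (∏ m ∈ Finset.range (n + 1),
        (1 + (X : ℤ⟦X⟧) ^ (m + 1) + X ^ (2 * (m + 1)))) := by
  intro n
  have hsplit : ∏ m ∈ range (n + 3), trinomial (m + 1) =
      (1 + X + X ^ 2) * (1 + X ^ 2 + X ^ 4) * ∏ m ∈ range (n + 1), (trinomial (m + 3) : ℤ⟦X⟧) := by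
    rw [prod_range_succ', prod_range_succ']
    simp only [trinomial]
    ring
  have hfactors₀ : CoeffLE 0 ((1 + X + X ^ 2) * (1 + X ^ 2 + X ^ 4) : ℤ⟦X⟧) := by
    simpa [trinomial] using (coeffLE_zero_trinomial 1).mul_nonneg (coeffLE_zero_trinomial 2)
  have hrhs : ∏ m ∈ range (n + 1), (1 + X ^ (m + 1) + X ^ (2 * (m + 1)) : ℤ⟦X⟧) =
      ∏ m ∈ range (n + 1), trinomial (m + 1) := rfl
  rw [hrhs, ← coeff_prod_range_trinomial_of_le (N := n + 3) (by omega), hsplit]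
  refine (coeffLE_refl _).mul ?_ (coeffLE_zero_prod fun m _ => coeffLE_zero_one_add_X_pow _)
    hfactors₀ n
  exact coeffLE_prod (fun m _ => coeffLE_zero_one_add_X_pow _)
    fun m _ => coeffLE_one_add_X_pow_trinomial _
end

section
/- For all n > 4, ∑_{i=0}^{n−5} d_3(i) ≥ d_3(n−1), where d_3(m) counts partitions of m into distinct parts each at least 3 and d_3(0) = 1. -/
/-!
Deleting the largest part `k` of a partition of `N` into distinct parts `≥ b` leaves a partition
of `N - k` of the same kind, and the partition is recovered from `N - k` and the remainder. When
`b < N` the largest part exceeds `b`: otherwise every remaining part would lie in `[b, k) = ∅`,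
forcing `N = k ≤ b`. So the remainder is a partition of some `i < N - b`.
-/

open Finset PowerSeries

namespace Multiset

variable {α : Type*} [LinearOrder α] [OrderBot α] {s : Multiset α}

theorem sup_mem_of_ne_zero_s18 (hs : s ≠ 0) : s.sup ∈ s := by
  induction s using Multiset.induction_on with
  | empty => contradiction
  | cons a s ih =>
    rw [sup_cons]
    rcases eq_or_ne s 0 with rfl | hs₀
    · simp
    · rcases max_choice a s.sup with h | h <;> simp [h, ih hs₀]

theorem lt_sup_of_mem_erase_sup (hs : s.Nodup) {a : α} (ha : a ∈ s.erase s.sup) : a < s.sup :=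
  (le_sup (mem_of_mem_erase ha)).lt_of_ne fun h => hs.notMem_erase (h ▸ ha)

end Multiset

namespace Nat.Partition

variable {N : ℕ}

theorem parts_ne_zero (p : N.Partition) (hN : N ≠ 0) : p.parts ≠ 0 := by
  rintro h
  exact hN (by simpa [h] using p.parts_sum.symm)

theorem sup_parts_mem (p : N.Partition) (hN : N ≠ 0) : p.parts.sup ∈ p.parts :=
  Multiset.sup_mem_of_ne_zero_s18 (p.parts_ne_zero hN)

theorem sup_parts_le (p : N.Partition) : p.parts.sup ≤ N :=
  Multiset.sup_le.2 fun _ => le_of_mem_parts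

theorem sup_parts_add_sum_erase (p : N.Partition) (hN : N ≠ 0) :
    p.parts.sup + (p.parts.erase p.parts.sup).sum = N := by
  rw [Multiset.sum_erase (p.sup_parts_mem hN), p.parts_sum]

def eraseMax (p : N.Partition) : Σ m : ℕ, m.Partition :=
  ⟨N - p.parts.sup,
    { parts := p.parts.erase p.parts.sup
      parts_pos := fun h => p.parts_pos (Multiset.mem_of_mem_erase h)
      parts_sum := by
        rcases eq_or_ne N 0 with rfl | hN
        · simp
        · have := p.sup_parts_add_sum_erase hN
          omega }⟩

@[simp]
theorem eraseMax_fst (p : N.Partition) : p.eraseMax.1 = N - p.parts.sup := rfl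

@[simp]
theorem eraseMax_snd_parts (p : N.Partition) :
    p.eraseMax.2.parts = p.parts.erase p.parts.sup := rfl

theorem eraseMax_injective : Function.Injective (eraseMax (N := N)) := by
  rcases eq_or_ne N 0 with rfl | hN
  · exact Function.injective_of_subsingleton _
  intro p q h
  have hsup : p.parts.sup = q.parts.sup := by
    have := congrArg Sigma.fst h
    simp only [eraseMax_fst] at this
    have := p.sup_parts_le
    have := q.sup_parts_le
    omega
  have herase := congrArg (fun r : Σ m : ℕ, m.Partition => r.2.parts) h
  simp only [eraseMax_snd_parts] at herase
  ext1
  rw [← Multiset.cons_erase (p.sup_parts_mem hN), ← Multiset.cons_erase (q.sup_parts_mem hN),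
    herase, hsup]

variable {b : ℕ} {p : N.Partition}

theorem lt_sup_parts (hbN : b < N) (hp : p ∈ distincts N ∩ restricted N (b ≤ ·)) :
    b < p.parts.sup := by
  simp only [distincts, restricted, mem_inter, mem_filter, mem_univ, true_and] at hp
  rcases Multiset.empty_or_exists_mem (p.parts.erase p.parts.sup) with h | ⟨j, hj⟩
  · have := p.sup_parts_add_sum_erase (by omega)
    simp only [h, Multiset.sum_zero] at this
    omega
  · exact (hp.2 j (Multiset.mem_of_mem_erase hj)).trans_lt
      (Multiset.lt_sup_of_mem_erase_sup hp.1 hj)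

theorem eraseMax_snd_mem (hp : p ∈ distincts N ∩ restricted N (b ≤ ·)) :
    p.eraseMax.2 ∈ distincts _ ∩ restricted _ (b ≤ ·) := by
  simp only [distincts, restricted, mem_inter, mem_filter, mem_univ, true_and] at hp ⊢
  exact ⟨hp.1.erase _, fun i hi => hp.2 i (Multiset.mem_of_mem_erase hi)⟩

theorem card_distincts_inter_restricted_le_sum (hbN : b < N) :
    #(distincts N ∩ restricted N (b ≤ ·)) ≤
      ∑ i ∈ range (N - b), #(distincts i ∩ restricted i (b ≤ ·)) := by
  rw [← Finset.card_sigma]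
  refine card_le_card_of_injOn eraseMax (fun p hp => ?_) eraseMax_injective.injOn
  have := lt_sup_parts hbN hp
  have := p.sup_parts_le
  exact mem_sigma.2 ⟨mem_range.2 (by simp only [eraseMax_fst]; omega), eraseMax_snd_mem hp⟩

end Nat.Partition

open Nat.Partition

theorem d3_eq_card (m : ℕ) : d3 m = #(distincts m ∩ restricted m (3 ≤ ·)) := by
  rw [d3, distincts, restricted, filter_and]

theorem stmt18 : ∀ n : ℕ, 4 < n → d3 (n - 1) ≤ ∑ i ∈ Finset.range (n - 4), d3 i := by
  intro n hn
  have h := card_distincts_inter_restricted_le_sum (b := 3) (N := n - 1) (by omega)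
  simpa only [d3_eq_card, show n - 1 - 3 = n - 4 by omega] using h
end
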